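/- arXiv:1403.6576 — 4 statements merged into one kernel-verified Lean document; each statement's English description precedes it below -/
import Mathlib

section
/- Let Ω' = [-1,1]^{n-1} ⊂ ℝ^{n-1}. For every λ ≥ 0 there exists an L²-normalized function f_λ on ℝ^{n-1} such that: (1) supp f_λ ⊂ Ω'; (2) the Fourier transform of f_λ is nonnegative everywhere; (3) there is a constant c₁ > 0 depending only on n such that the Fourier transform of f_λ satisfies f̂_λ(ξ') ≥ c₁ for all ξ' with |ξ' − η'_λ| ≤ 1, where η'_λ = (λ, 0, …, 0). -/
open MeasureTheory

/-- The Fourier transform with the convention `f̂(ξ) = ∫ f(x) e^{-i⟨x,ξ⟩} dx`. -/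
noncomputable def fourierNC {m : ℕ} (f : EuclideanSpace ℝ (Fin m) → ℂ)
    (ξ : EuclideanSpace ℝ (Fin m)) : ℂ :=
  ∫ x, Complex.exp (-(Complex.I * ((inner ℝ x ξ : ℝ) : ℂ))) * f x

/-! Take the tensor product of tents `max (1 - |xᵢ|) 0`, modulated by `e^{i⟨x,η⟩}` and normalized
in `L²`; the normalizing constant does not depend on `η` since modulation preserves `|f|`. The
Fourier transform of a tent is `sinc (s/2)^2 ≥ 0` (a tent is the autocorrelation of the indicator
of `[-1/2, 1/2]`), modulation translates the Fourier transform by `η`, and Jordan's inequality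
`sinc ≥ 2/π` on `[-π/2, π/2]` bounds it below near `η`. -/

open Complex Real

noncomputable def tent (x : ℝ) : ℝ := max (1 - |x|) 0

lemma continuous_tent : Continuous tent := by
  unfold tent; fun_prop

lemma tent_zero : tent 0 = 1 := by
  simp [tent]

lemma tent_eq_zero_of_notMem_Icc {x : ℝ} (hx : x ∉ Set.Icc (-1 : ℝ) 1) : tent x = 0 := by
  rw [Set.mem_Icc, not_and_or, not_le, not_le] at hx
  unfold tent
  rcases hx with hx | hx
  · rw [abs_of_neg (by linarith)]; simp only [max_eq_right_iff]; linarith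
  · rw [abs_of_pos (by linarith)]; simp only [max_eq_right_iff]; linarith

lemma tent_of_mem_Icc_zero_one {x : ℝ} (hx : x ∈ Set.Icc (0 : ℝ) 1) : tent x = 1 - x := by
  rw [tent, abs_of_nonneg hx.1, max_eq_left (by linarith [hx.2])]

lemma tent_of_mem_Icc_neg_one_zero {x : ℝ} (hx : x ∈ Set.Icc (-1 : ℝ) 0) : tent x = 1 + x := by
  rw [tent, abs_of_nonpos hx.2, max_eq_left (by linarith [hx.1]), sub_neg_eq_add]

lemma hasDerivAt_affine_mul_cexp {c : ℂ} (hc : c ≠ 0) (p q : ℂ) (y : ℝ) :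
    HasDerivAt (fun y : ℝ => -((p + q * y) / c + q / c ^ 2) * cexp (-(c * y)))
      ((p + q * y) * cexp (-(c * y))) y := by
  have haffine : HasDerivAt (fun z : ℂ => -((p + q * z) / c + q / c ^ 2)) (-(q * 1 / c)) y :=
    ((((hasDerivAt_id (y : ℂ)).const_mul q).const_add p).div_const c).add_const (q / c ^ 2) |>.neg
  have hexp : HasDerivAt (fun z : ℂ => cexp (-(c * z))) (cexp (-(c * y)) * -(c * 1)) y :=
    ((hasDerivAt_id (y : ℂ)).const_mul c).neg.cexp
  refine (haffine.mul hexp).comp_ofReal.congr_deriv ?_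
  field_simp
  ring

-- The pieces are written in the shape `(p + q * x) * cexp (-(c * x))` of
-- `hasDerivAt_affine_mul_cexp`.
lemma integral_cexp_mul_tent_eq_add (s : ℝ) :
    ∫ x : ℝ, cexp (-(I * ↑(x * s))) * tent x =
      (∫ x in (-1 : ℝ)..0, (1 + 1 * (x : ℂ)) * cexp (-(I * s * x)))
        + ∫ x in (0 : ℝ)..1, (1 + -1 * (x : ℂ)) * cexp (-(I * s * x)) := by
  have hg : Continuous fun x : ℝ => cexp (-(I * ↑(x * s))) * tent x := by
    have := continuous_tent; fun_prop
  have hg_out : ∀ x ∉ Set.Icc (-1 : ℝ) 1, cexp (-(I * ↑(x * s))) * tent x = 0 := fun x hx => by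
    simp [tent_eq_zero_of_notMem_Icc hx]
  rw [← setIntegral_eq_integral_of_forall_compl_eq_zero hg_out, integral_Icc_eq_integral_Ioc,
    ← intervalIntegral.integral_of_le (by norm_num),
    ← intervalIntegral.integral_add_adjacent_intervals (hg.intervalIntegrable _ 0)
      (hg.intervalIntegrable 0 _)]
  congr 1 <;> refine intervalIntegral.integral_congr fun x hx => ?_ <;>
    rw [Set.uIcc_of_le (by norm_num)] at hx
  · simp only [tent_of_mem_Icc_neg_one_zero hx]
    push_cast; ring_nf
  · simp only [tent_of_mem_Icc_zero_one hx]
    push_cast; ring_nf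

lemma integral_cexp_mul_tent (s : ℝ) :
    ∫ x : ℝ, cexp (-(I * ↑(x * s))) * tent x = ↑(sinc (s / 2) ^ 2) := by
  rw [integral_cexp_mul_tent_eq_add]
  rcases eq_or_ne s 0 with rfl | hs
  · simp only [ofReal_zero, mul_zero, zero_mul, neg_zero, Complex.exp_zero, mul_one]
    rw [intervalIntegral.integral_add (by simp) (Continuous.intervalIntegrable (by fun_prop) _ _),
      intervalIntegral.integral_add (by simp) (Continuous.intervalIntegrable (by fun_prop) _ _)]
    simp only [one_mul, neg_one_mul, intervalIntegral.integral_neg, intervalIntegral.integral_const,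
      intervalIntegral.integral_ofReal (f := fun x => x), integral_id]
    norm_num
  set c : ℂ := I * s with hc_def
  have hc : c ≠ 0 := mul_ne_zero I_ne_zero (ofReal_ne_zero.mpr hs)
  have hint (q : ℂ) (a b : ℝ) :
      IntervalIntegrable (fun x : ℝ => (1 + q * x) * cexp (-(c * x))) volume a b :=
    Continuous.intervalIntegrable (by fun_prop) a b
  rw [intervalIntegral.integral_eq_sub_of_hasDerivAt
      (fun x _ => hasDerivAt_affine_mul_cexp hc 1 1 x) (hint _ _ _),
    intervalIntegral.integral_eq_sub_of_hasDerivAt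
      (fun x _ => hasDerivAt_affine_mul_cexp hc 1 (-1) x) (hint _ _ _)]
  have hcos : cexp c + cexp (-c) = 2 * (Real.cos s : ℂ) := by
    rw [ofReal_cos, two_cos, hc_def]; ring_nf
  have hcos_half : Real.cos s = 1 - 2 * Real.sin (s / 2) ^ 2 := by
    conv_lhs => rw [← mul_div_cancel₀ s two_ne_zero, Real.cos_two_mul', Real.cos_sq']
    ring
  push_cast
  simp only [mul_zero, neg_zero, Complex.exp_zero, mul_neg, mul_one, neg_neg]
  trans (cexp c + cexp (-c) - 2) / c ^ 2
  · field_simp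
    ring
  rw [hcos, hc_def, mul_pow, I_sq, hcos_half, sinc_of_ne_zero (div_ne_zero hs two_ne_zero)]
  push_cast
  field_simp
  ring

theorem integral_euclideanSpace_prod {ι 𝕜 : Type*} [Fintype ι] [RCLike 𝕜] (g : ι → ℝ → 𝕜) :
    ∫ x : EuclideanSpace ℝ ι, ∏ i, g i (x i) = ∏ i, ∫ y, g i y := by
  rw [← integral_fintype_prod_volume_eq_prod,
    ← (EuclideanSpace.volume_preserving_symm_measurableEquiv_toLp ι).integral_comp']
  rfl

theorem fourierNC_prod {m : ℕ} (g : Fin m → ℝ → ℂ) (ξ : EuclideanSpace ℝ (Fin m)) :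
    fourierNC (fun x => ∏ i, g i (x i)) ξ = ∏ i, ∫ y : ℝ, cexp (-(I * ↑(y * ξ i))) * g i y := by
  rw [fourierNC, ← integral_euclideanSpace_prod]
  congr 1 with x
  rw [Finset.prod_mul_distrib, ← Complex.exp_sum, PiLp.inner_apply]
  push_cast
  simp only [RCLike.inner_apply, conj_trivial, Finset.mul_sum, Finset.sum_neg_distrib, ofReal_mul,
    mul_comm]

theorem fourierNC_cexp_inner_mul {m : ℕ} (f : EuclideanSpace ℝ (Fin m) → ℂ)
    (η ξ : EuclideanSpace ℝ (Fin m)) :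
    fourierNC (fun x => cexp (I * ↑(inner ℝ x η)) * f x) ξ = fourierNC f (ξ - η) := by
  simp only [fourierNC, inner_sub_right]
  congr 1 with x
  rw [← mul_assoc, ← Complex.exp_add]
  push_cast
  ring_nf

theorem fourierNC_smul {m : ℕ} (a : ℝ) (f : EuclideanSpace ℝ (Fin m) → ℂ)
    (ξ : EuclideanSpace ℝ (Fin m)) : fourierNC (a • f) ξ = a • fourierNC f ξ := by
  simp only [fourierNC, Pi.smul_apply, mul_smul_comm, integral_smul]

noncomputable def cubeTent (m : ℕ) : EuclideanSpace ℝ (Fin m) → ℂ := fun x => ∏ i, (tent (x i) : ℂ)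

lemma continuous_cubeTent (m : ℕ) : Continuous (cubeTent m) := by
  have := continuous_tent
  unfold cubeTent; fun_prop

lemma support_cubeTent_subset (m : ℕ) :
    Function.support (cubeTent m) ⊆ {x | ∀ i : Fin m, x i ∈ Set.Icc (-1 : ℝ) 1} := by
  intro x hx i
  by_contra hi
  exact hx (Finset.prod_eq_zero (Finset.mem_univ i) (by simp [tent_eq_zero_of_notMem_Icc hi]))

lemma isCompact_cube (m : ℕ) :
    IsCompact {x : EuclideanSpace ℝ (Fin m) | ∀ i : Fin m, x i ∈ Set.Icc (-1 : ℝ) 1} := by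
  have := (EuclideanSpace.equiv (Fin m) ℝ).toHomeomorph.isCompact_preimage.mpr
    (isCompact_univ_pi fun _ => isCompact_Icc (a := (-1 : ℝ)) (b := 1))
  simpa [Set.pi] using this

lemma memLp_cubeTent (m : ℕ) : MemLp (cubeTent m) 2 volume :=
  (continuous_cubeTent m).memLp_of_hasCompactSupport
    (HasCompactSupport.intro' (isCompact_cube m) ((isCompact_cube m).isClosed) fun x hx => by
      simpa using fun h => hx (support_cubeTent_subset m h))

lemma eLpNorm_cubeTent_ne_zero (m : ℕ) : eLpNorm (cubeTent m) 2 volume ≠ 0 := by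
  rw [Ne, eLpNorm_eq_zero_iff (continuous_cubeTent m).aestronglyMeasurable two_ne_zero,
    (continuous_cubeTent m).ae_eq_iff_eq volume continuous_zero]
  intro h
  simpa [cubeTent, tent_zero] using congrFun h 0

lemma fourierNC_cubeTent (m : ℕ) (ξ : EuclideanSpace ℝ (Fin m)) :
    fourierNC (cubeTent m) ξ = ↑(∏ i, sinc (ξ i / 2) ^ 2) := by
  unfold cubeTent
  rw [fourierNC_prod fun _ y => (tent y : ℂ)]
  simp only [integral_cexp_mul_tent, ofReal_prod]

lemma two_div_pi_le_sinc {x : ℝ} (hx : |x| ≤ π / 2) : 2 / π ≤ sinc x := by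
  have hsinc_abs : sinc x = sinc |x| := by
    rcases abs_choice x with h | h <;> rw [h]; rw [sinc_neg]
  rw [hsinc_abs]
  rcases (abs_nonneg x).eq_or_lt with h0 | hpos
  · rw [← h0, sinc_zero, div_le_one pi_pos]
    exact two_le_pi
  · rw [sinc_of_ne_zero hpos.ne', le_div_iff₀ hpos]
    exact mul_le_sin hpos.le hx

lemma pow_le_prod_sinc_sq {m : ℕ} {ζ : EuclideanSpace ℝ (Fin m)} (hζ : ‖ζ‖ ≤ π) :
    ((2 / π) ^ 2) ^ m ≤ ∏ i, sinc (ζ i / 2) ^ 2 := by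
  have hsinc : ∀ i, 2 / π ≤ sinc (ζ i / 2) := fun i => two_div_pi_le_sinc <| by
    rw [abs_div, abs_two, div_le_div_iff_of_pos_right two_pos]
    exact (PiLp.norm_apply_le ζ i).trans hζ
  calc ((2 / π) ^ 2) ^ m = ∏ _i : Fin m, (2 / π) ^ 2 := by simp
    _ ≤ ∏ i, sinc (ζ i / 2) ^ 2 := Finset.prod_le_prod (fun _ _ => by positivity)
        fun i _ => pow_le_pow_left₀ (by positivity) (hsinc i) 2

noncomputable def tentPacket (m : ℕ) (η : EuclideanSpace ℝ (Fin m)) :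
    EuclideanSpace ℝ (Fin m) → ℂ :=
  (eLpNorm (cubeTent m) 2 volume)⁻¹.toReal • fun x => cexp (I * ↑(inner ℝ x η)) * cubeTent m x

section tentPacket

variable {m : ℕ} (η : EuclideanSpace ℝ (Fin m))

lemma norm_cexp_inner_mul_cubeTent (x : EuclideanSpace ℝ (Fin m)) :
    ‖cexp (I * ↑(inner ℝ x η)) * cubeTent m x‖ = ‖cubeTent m x‖ := by
  rw [norm_mul, norm_exp_I_mul_ofReal, one_mul]

lemma memLp_tentPacket : MemLp (tentPacket m η) 2 volume :=
  ((memLp_cubeTent m).congr_norm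
    (((by fun_prop : Continuous fun x => cexp (I * ↑(inner ℝ x η)))).mul
      (continuous_cubeTent m)).aestronglyMeasurable
    (.of_forall fun x => (norm_cexp_inner_mul_cubeTent η x).symm)).const_smul _

lemma eLpNorm_tentPacket : eLpNorm (tentPacket m η) 2 volume = 1 := by
  have hne_zero := eLpNorm_cubeTent_ne_zero m
  have hne_top := (memLp_cubeTent m).eLpNorm_ne_top
  rw [tentPacket, eLpNorm_const_smul, eLpNorm_congr_norm_ae
      (.of_forall (norm_cexp_inner_mul_cubeTent η)), Real.enorm_eq_ofReal ENNReal.toReal_nonneg,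
    ENNReal.ofReal_toReal (ENNReal.inv_ne_top.2 hne_zero), ENNReal.inv_mul_cancel hne_zero hne_top]

lemma support_tentPacket_subset :
    Function.support (tentPacket m η) ⊆ {x | ∀ i : Fin m, x i ∈ Set.Icc (-1 : ℝ) 1} :=
  (Function.support_const_smul_subset _ _).trans <|
    (Function.support_mul_subset_right _ _).trans (support_cubeTent_subset m)

lemma fourierNC_tentPacket (ξ : EuclideanSpace ℝ (Fin m)) :
    fourierNC (tentPacket m η) ξ =
      ↑((eLpNorm (cubeTent m) 2 volume)⁻¹.toReal * ∏ i, sinc ((ξ - η) i / 2) ^ 2) := by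
  rw [tentPacket, fourierNC_smul, fourierNC_cexp_inner_mul, fourierNC_cubeTent, real_smul,
    ofReal_mul]

end tentPacket

/-- for every `λ ≥ 0` there is an `L²`-normalized function supported in the
cube `[-1,1]^{n-1}`, with everywhere nonnegative Fourier transform, whose Fourier transform
is bounded below by a dimensional constant `c₁ > 0` on the unit ball around `η'_λ = (λ,0,…,0)`. -/
theorem statement0 (m : ℕ) (hm : 0 < m) :
    ∃ c₁ : ℝ, 0 < c₁ ∧ ∀ lam : ℝ, 0 ≤ lam →
      ∃ f : EuclideanSpace ℝ (Fin m) → ℂ,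
        MemLp f 2 volume ∧ eLpNorm f 2 volume = 1 ∧
        Function.support f ⊆ {x | ∀ i : Fin m, x i ∈ Set.Icc (-1 : ℝ) 1} ∧
        (∀ ξ, 0 ≤ (fourierNC f ξ).re ∧ (fourierNC f ξ).im = 0) ∧
        (∀ ξ : EuclideanSpace ℝ (Fin m),
          ‖ξ - lam • EuclideanSpace.single (⟨0, hm⟩ : Fin m) (1 : ℝ)‖ ≤ 1 →
            c₁ ≤ (fourierNC f ξ).re) := by
  set a := (eLpNorm (cubeTent m) 2 volume)⁻¹.toReal
  have ha : 0 < a := ENNReal.toReal_pos (ENNReal.inv_ne_zero.2 (memLp_cubeTent m).eLpNorm_ne_top)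
    (ENNReal.inv_ne_top.2 (eLpNorm_cubeTent_ne_zero m))
  refine ⟨a * ((2 / π) ^ 2) ^ m, by positivity, fun lam _ => ?_⟩
  set η := lam • EuclideanSpace.single (⟨0, hm⟩ : Fin m) (1 : ℝ)
  refine ⟨tentPacket m η, memLp_tentPacket η, eLpNorm_tentPacket η, support_tentPacket_subset η,
    fun ξ => ?_, fun ξ hξ => ?_⟩
  · rw [fourierNC_tentPacket, ofReal_re, ofReal_im]
    exact ⟨by positivity, rfl⟩
  · rw [fourierNC_tentPacket, ofReal_re]
    exact mul_le_mul_of_nonneg_left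
      (pow_le_prod_sinc_sq (hξ.trans (by linarith [pi_gt_three]))) ha.le
end

section
/- Let n ≥ 3 and let K⁰ : ℝ^n × ℝ^n → ℂ be a measurable kernel supported in {|x−y| ≤ Mλ^{-1}} with |K⁰(x,y)| ≤ |x−y|^{-(n-2)}. Let Σ ⊂ ℝ^n be a compact smooth hypersurface with surface measure σ, and define S⁰u(x) = ∫_{ℝ^n} K⁰(x,y) u(y) dy for x ∈ Σ. Then ‖S⁰u‖_{L²(Σ,σ)} ≤ C_M λ^{-3/2} ‖u‖_{L²(ℝ^n)} for all λ ≥ 1. -/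
open MeasureTheory

/-- A compact smooth embedded hypersurface in `ℝⁿ`: a compact set which is locally the
regular zero set of a smooth real-valued function. -/
def IsCompactSmoothHypersurface {n : ℕ} (S : Set (EuclideanSpace ℝ (Fin n))) : Prop :=
  IsCompact S ∧ ∀ x ∈ S, ∃ U : Set (EuclideanSpace ℝ (Fin n)), IsOpen U ∧ x ∈ U ∧
    ∃ f : EuclideanSpace ℝ (Fin n) → ℝ, ContDiff ℝ (⊤ : ℕ∞) f ∧
      (∀ y ∈ U, fderiv ℝ f y ≠ 0) ∧ S ∩ U = {y ∈ U | f y = 0}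

/-- The surface measure on a hypersurface: `(n−1)`-dimensional Hausdorff measure restricted. -/
noncomputable def surfMeasure {n : ℕ} (S : Set (EuclideanSpace ℝ (Fin n))) :
    Measure (EuclideanSpace ℝ (Fin n)) :=
  (Measure.hausdorffMeasure ((n : ℝ) - 1)).restrict S

open Metric Set
open scoped ENNReal NNReal

lemma eucl_norm_le_sqrt_mul {m : ℕ} (z : Fin m → ℝ) :
    ‖(WithLp.equiv 2 (Fin m → ℝ)).symm z‖ ≤ Real.sqrt m * ‖z‖ := by
  rw [EuclideanSpace.norm_eq]
  have h1 : ∑ i : Fin m, ‖((WithLp.equiv 2 (Fin m → ℝ)).symm z) i‖ ^ 2 ≤ (m : ℝ) * ‖z‖ ^ 2 := by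
    calc ∑ i : Fin m, ‖((WithLp.equiv 2 (Fin m → ℝ)).symm z) i‖ ^ 2
        ≤ ∑ _i : Fin m, ‖z‖ ^ 2 := by
          refine Finset.sum_le_sum fun i _ => ?_
          have : ‖((WithLp.equiv 2 (Fin m → ℝ)).symm z) i‖ ≤ ‖z‖ := by
            simpa using norm_le_pi_norm z i
          exact pow_le_pow_left₀ (norm_nonneg _) this 2
      _ = (m : ℝ) * ‖z‖ ^ 2 := by simp [mul_comm]
  calc √(∑ i : Fin m, ‖((WithLp.equiv 2 (Fin m → ℝ)).symm z) i‖ ^ 2)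
      ≤ √((m : ℝ) * ‖z‖ ^ 2) := Real.sqrt_le_sqrt h1
    _ = Real.sqrt m * ‖z‖ := by
        rw [Real.sqrt_mul (Nat.cast_nonneg m), Real.sqrt_sq (norm_nonneg _)]

lemma hausdorff_eucl_ball_le (m : ℕ) (ρ : ℝ) (hρ : 0 ≤ ρ) :
    μH[(m:ℝ)] (closedBall (0 : EuclideanSpace ℝ (Fin m)) ρ)
      ≤ ((Real.sqrt m).toNNReal : ℝ≥0∞) ^ (m:ℝ) * ENNReal.ofReal ((2*ρ)^m) := by
  set ψ : (Fin m → ℝ) → EuclideanSpace ℝ (Fin m) := fun z => (WithLp.equiv 2 (Fin m → ℝ)).symm z with hψ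
  have hlip : LipschitzWith (Real.sqrt m).toNNReal ψ := by
    refine LipschitzWith.of_dist_le_mul fun x y => ?_
    have : ψ x - ψ y = ψ (x - y) := rfl
    rw [dist_eq_norm, dist_eq_norm, this]
    calc ‖ψ (x-y)‖ ≤ Real.sqrt m * ‖x - y‖ := eucl_norm_le_sqrt_mul _
      _ = ((Real.sqrt m).toNNReal : ℝ) * ‖x-y‖ := by
          rw [Real.coe_toNNReal _ (Real.sqrt_nonneg _)]
  have hsub : closedBall (0 : EuclideanSpace ℝ (Fin m)) ρ
      ⊆ ψ '' (closedBall (0 : Fin m → ℝ) ρ) := by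
    intro x hx
    refine ⟨WithLp.equiv 2 (Fin m → ℝ) x, ?_, rfl⟩
    rw [mem_closedBall, dist_zero_right] at hx ⊢
    rw [pi_norm_le_iff_of_nonneg hρ]
    intro i
    calc ‖WithLp.equiv 2 (Fin m → ℝ) x i‖ ≤ ‖x‖ := by
          rw [EuclideanSpace.norm_eq]
          have : ‖x i‖ = √(‖x i‖^2) := by rw [Real.sqrt_sq (norm_nonneg _)]
          rw [show (WithLp.equiv 2 (Fin m → ℝ)) x i = x i from rfl, this]
          exact Real.sqrt_le_sqrt (Finset.single_le_sum (f := fun i => ‖x i‖^2)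
            (fun i _ => sq_nonneg _) (Finset.mem_univ i))
      _ ≤ ρ := hx
  calc μH[(m:ℝ)] (closedBall (0 : EuclideanSpace ℝ (Fin m)) ρ)
      ≤ μH[(m:ℝ)] (ψ '' (closedBall (0 : Fin m → ℝ) ρ)) := measure_mono hsub
    _ ≤ ((Real.sqrt m).toNNReal : ℝ≥0∞) ^ (m:ℝ) * μH[(m:ℝ)] (closedBall (0 : Fin m → ℝ) ρ) :=
        hlip.hausdorffMeasure_image_le (Nat.cast_nonneg m) _
    _ = ((Real.sqrt m).toNNReal : ℝ≥0∞) ^ (m:ℝ) * ENNReal.ofReal ((2*ρ)^m) := by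
        rw [show ((m:ℝ)) = ((Fintype.card (Fin m) : ℝ)) by simp,
          MeasureTheory.hausdorffMeasure_pi_real, Real.volume_pi_closedBall _ hρ]
        simp


lemma hausdorff_graph_piece_le {n : ℕ} (hn : 3 ≤ n)
    {G : Set (EuclideanSpace ℝ (Fin n))} {v : EuclideanSpace ℝ (Fin n)} (hv : ‖v‖ = 1)
    (Kc : ℝ≥0)
    (hK : ∀ p ∈ G, ∀ q ∈ G, ‖p - q‖ ≤ Kc * ‖(p - q) - (inner ℝ v (p - q) : ℝ) • v‖)
    (y : EuclideanSpace ℝ (Fin n)) (ρ : ℝ) (hρ : 0 ≤ ρ) :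
    μH[(n:ℝ)-1] (G ∩ closedBall y ρ)
      ≤ (Kc : ℝ≥0∞) ^ ((n:ℝ)-1) * (((Real.sqrt (n-1)).toNNReal : ℝ≥0∞) ^ (((n-1:ℕ)):ℝ)
          * ENNReal.ofReal ((2*ρ)^(n-1))) := by
  have hd : (0:ℝ) ≤ (n:ℝ) - 1 := by
    have : (3:ℝ) ≤ (n:ℝ) := by exact_mod_cast hn
    linarith
  have hm : (((n-1 : ℕ)):ℝ) = (n:ℝ) - 1 := by
    have h1 : 1 ≤ n := by omega
    push_cast [h1]; ring
  set π : EuclideanSpace ℝ (Fin n) → EuclideanSpace ℝ (Fin n) :=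
    fun p => p - (inner ℝ v p : ℝ) • v with hπ
  have hinner : ∀ p, (inner ℝ v (π p) : ℝ) = 0 := by
    intro p
    simp only [hπ, inner_sub_right, real_inner_smul_right]
    rw [real_inner_self_eq_norm_sq, hv]
    ring
  have pyth : ∀ p, ‖p‖^2 = (inner ℝ v p : ℝ)^2 + ‖π p‖^2 := by
    intro p
    have hdecomp : p = (inner ℝ v p : ℝ) • v + π p := by simp [hπ]
    have h2 : ‖(inner ℝ v p : ℝ) • v + π p‖^2
        = ‖(inner ℝ v p : ℝ) • v‖^2 + 2 * (inner ℝ ((inner ℝ v p : ℝ) • v) (π p) : ℝ) + ‖π p‖^2 :=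
      norm_add_sq_real _ _
    rw [← hdecomp] at h2
    rw [h2, real_inner_smul_left, hinner, norm_smul, hv]
    simp [sq_abs]
  have norm_π_le : ∀ p, ‖π p‖ ≤ ‖p‖ := by
    intro p
    have h := pyth p
    nlinarith [norm_nonneg (π p), norm_nonneg p, sq_nonneg (inner ℝ v p : ℝ)]
  have πlin : ∀ p q, π p - π q = π (p - q) := by
    intro p q
    simp only [hπ, inner_sub_right, sub_smul]
    abel
  set T := G ∩ closedBall y ρ with hT
  have hKT : ∀ p ∈ T, ∀ q ∈ T, ‖p - q‖ ≤ Kc * ‖π (p - q)‖ := fun p hp q hq => hK p hp.1 q hq.1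
  have injOn : Set.InjOn π T := by
    intro p hp q hq hpq
    have h0 : π (p - q) = 0 := by rw [← πlin, hpq]; simp
    have h1 := hKT p hp q hq
    rw [h0, norm_zero, mul_zero] at h1
    have h2 : p - q = 0 := norm_eq_zero.mp (le_antisymm h1 (norm_nonneg _))
    exact sub_eq_zero.mp h2
  set F := Function.invFunOn π T with hF
  have hFmem : ∀ a ∈ π '' T, F a ∈ T ∧ π (F a) = a := by
    intro a ha
    exact ⟨Function.invFunOn_mem ha, Function.invFunOn_eq ha⟩
  have Flip : LipschitzOnWith Kc F (π '' T) := by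
    refine LipschitzOnWith.of_dist_le_mul fun a ha b hb => ?_
    obtain ⟨hFa, hπa⟩ := hFmem a ha
    obtain ⟨hFb, hπb⟩ := hFmem b hb
    rw [dist_eq_norm, dist_eq_norm]
    calc ‖F a - F b‖ ≤ Kc * ‖π (F a - F b)‖ := hKT _ hFa _ hFb
      _ = Kc * ‖a - b‖ := by rw [← πlin, hπa, hπb]
  have Tsub : T ⊆ F '' (π '' T) := by
    intro p hp
    obtain ⟨hFp, hπp⟩ := hFmem (π p) ⟨p, hp, rfl⟩
    exact ⟨π p, ⟨p, hp, rfl⟩, injOn hFp hp hπp⟩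
  have hv0 : v ≠ 0 := fun h => by simp [h] at hv
  haveI : Fact (Module.finrank ℝ (EuclideanSpace ℝ (Fin n)) = (n-1) + 1) := by
    constructor
    rw [finrank_euclideanSpace_fin]
    omega
  set V := (Submodule.span ℝ {v})ᗮ with hV
  set B := OrthonormalBasis.fromOrthogonalSpanSingleton (𝕜 := ℝ) (n-1) hv0 with hB
  have hmemV : ∀ p, π p ∈ V := by
    intro p
    rw [hV, Submodule.mem_orthogonal_singleton_iff_inner_right]
    exact hinner p
  have hπT : π '' T ⊆ (V : Set (EuclideanSpace ℝ (Fin n))) ∩ closedBall (π y) ρ := by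
    rintro a ⟨p, hp, rfl⟩
    refine ⟨hmemV p, ?_⟩
    rw [mem_closedBall, dist_eq_norm, πlin]
    calc ‖π (p - y)‖ ≤ ‖p - y‖ := norm_π_le _
      _ ≤ ρ := by
        have := hp.2
        rwa [mem_closedBall, dist_eq_norm] at this
  set φ : EuclideanSpace ℝ (Fin (n-1)) → EuclideanSpace ℝ (Fin n) :=
    fun z => (B.repr.symm z : EuclideanSpace ℝ (Fin n)) + π y with hφ
  have hφiso : Isometry φ := by
    refine Isometry.of_dist_eq fun z w => ?_
    rw [hφ]
    simp only [dist_eq_norm, add_sub_add_right_eq_sub]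
    rw [← Submodule.coe_sub, ← map_sub]
    rw [show ‖((B.repr.symm (z-w) : V) : EuclideanSpace ℝ (Fin n))‖ = ‖B.repr.symm (z-w)‖ from rfl,
      B.repr.symm.norm_map]
  have himg : (V : Set (EuclideanSpace ℝ (Fin n))) ∩ closedBall (π y) ρ
      ⊆ φ '' closedBall 0 ρ := by
    rintro p ⟨hpV, hpB⟩
    refine ⟨B.repr ⟨p - π y, Submodule.sub_mem V hpV (hmemV y)⟩, ?_, ?_⟩
    · rw [mem_closedBall, dist_zero_right, B.repr.norm_map]
      rw [show ‖(⟨p - π y, Submodule.sub_mem V hpV (hmemV y)⟩ : V)‖ = ‖p - π y‖ from rfl]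
      rwa [mem_closedBall, dist_eq_norm] at hpB
    · rw [hφ]
      simp
  calc μH[(n:ℝ)-1] T ≤ μH[(n:ℝ)-1] (F '' (π '' T)) := measure_mono Tsub
    _ ≤ (Kc : ℝ≥0∞) ^ ((n:ℝ)-1) * μH[(n:ℝ)-1] (π '' T) :=
        Flip.hausdorffMeasure_image_le hd
    _ ≤ (Kc : ℝ≥0∞) ^ ((n:ℝ)-1) * (((Real.sqrt (n-1)).toNNReal : ℝ≥0∞) ^ (((n-1:ℕ)):ℝ)
          * ENNReal.ofReal ((2*ρ)^(n-1))) := by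
        refine mul_le_mul_right ?_ _
        calc μH[(n:ℝ)-1] (π '' T)
            ≤ μH[(n:ℝ)-1] (φ '' closedBall 0 ρ) := measure_mono (hπT.trans himg)
          _ = μH[(n:ℝ)-1] (closedBall (0 : EuclideanSpace ℝ (Fin (n-1))) ρ) :=
              hφiso.hausdorffMeasure_image (Or.inl hd) _
          _ ≤ ((Real.sqrt (n-1)).toNNReal : ℝ≥0∞) ^ (((n-1:ℕ)):ℝ)
              * ENNReal.ofReal ((2*ρ)^(n-1)) := by
              rw [← hm]
              simpa using hausdorff_eucl_ball_le (n-1) ρ hρ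

set_option maxHeartbeats 1000000 in
lemma local_graph_est {n : ℕ}
    {U : Set (EuclideanSpace ℝ (Fin n))} (hU : IsOpen U)
    {f : EuclideanSpace ℝ (Fin n) → ℝ} (hf : ContDiff ℝ (⊤ : ℕ∞) f)
    {x₀ : EuclideanSpace ℝ (Fin n)} (hx₀U : x₀ ∈ U)
    (hd0 : fderiv ℝ f x₀ ≠ 0) :
    ∃ r > 0, ball x₀ r ⊆ U ∧ ∃ v : EuclideanSpace ℝ (Fin n), ‖v‖ = 1 ∧ ∃ Kc : ℝ≥0,
      ∀ p ∈ ball x₀ r, ∀ q ∈ ball x₀ r, f p = 0 → f q = 0 →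
        ‖p - q‖ ≤ Kc * ‖(p - q) - (inner ℝ v (p - q) : ℝ) • v‖ := by
  set d := fderiv ℝ f x₀ with hdd
  -- a unit vector on which d is nonzero
  obtain ⟨w, hw⟩ : ∃ w, d w ≠ 0 := by
    by_contra h
    push_neg at h
    exact hd0 (ContinuousLinearMap.ext fun w => by simp [h w])
  have hw0 : w ≠ 0 := fun h => hw (by simp [h])
  set v := ‖w‖⁻¹ • w with hv
  have hvnorm : ‖v‖ = 1 := by
    rw [hv, norm_smul, norm_inv, norm_norm, inv_mul_cancel₀ (norm_ne_zero_iff.mpr hw0)]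
  have hdv : d v ≠ 0 := by
    have h1 : d v = ‖w‖⁻¹ * d w := by rw [hv, d.map_smul]; simp
    rw [h1]
    exact mul_ne_zero (inv_ne_zero (norm_ne_zero_iff.mpr hw0)) hw
  set c := |d v| with hc
  have hcpos : 0 < c := abs_pos.mpr hdv
  -- continuity of the derivative
  have hgc : Continuous fun x => fderiv ℝ f x := (hf.continuous_fderiv (by simp))
  have hWopen : IsOpen {x | ‖fderiv ℝ f x - d‖ < c/2} :=
    isOpen_lt (Continuous.norm (hgc.sub continuous_const)) continuous_const
  have hx₀W : x₀ ∈ {x | ‖fderiv ℝ f x - d‖ < c/2} := by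
    simp only [mem_setOf_eq, ← hdd, sub_self, norm_zero]
    positivity
  obtain ⟨r, hrpos, hrsub⟩ := Metric.isOpen_iff.mp (hU.inter hWopen) x₀ ⟨hx₀U, hx₀W⟩
  refine ⟨r, hrpos, fun x hx => (hrsub hx).1, v, hvnorm, ?_⟩
  set L := ‖d‖ + c/2 with hL
  have hball : ∀ x ∈ ball x₀ r, ‖fderiv ℝ f x‖ ≤ L ∧ c/2 ≤ |fderiv ℝ f x v| := by
    intro x hx
    have h1 : ‖fderiv ℝ f x - d‖ < c/2 := (hrsub hx).2
    constructor
    · calc ‖fderiv ℝ f x‖ = ‖(fderiv ℝ f x - d) + d‖ := by rw [sub_add_cancel]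
        _ ≤ ‖fderiv ℝ f x - d‖ + ‖d‖ := norm_add_le _ _
        _ ≤ L := by rw [hL]; linarith
    · have h2 : |fderiv ℝ f x v - d v| ≤ ‖fderiv ℝ f x - d‖ := by
        calc |fderiv ℝ f x v - d v| = ‖(fderiv ℝ f x - d) v‖ := by simp [Real.norm_eq_abs]
          _ ≤ ‖fderiv ℝ f x - d‖ * ‖v‖ := ContinuousLinearMap.le_opNorm _ _
          _ = ‖fderiv ℝ f x - d‖ := by rw [hvnorm, mul_one]
      have h3 : |d v| ≤ |fderiv ℝ f x v| + |fderiv ℝ f x v - d v| := by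
        calc |d v| = |fderiv ℝ f x v - (fderiv ℝ f x v - d v)| := by ring_nf
          _ ≤ |fderiv ℝ f x v| + |fderiv ℝ f x v - d v| := abs_sub _ _
      rw [← hc] at h3
      linarith
  have hLpos : 0 < L := by
    rw [hL]
    have := norm_nonneg d
    linarith
  set KR := Real.sqrt (1 + (2*L/c)^2) with hKR
  refine ⟨KR.toNNReal, ?_⟩
  intro p hp q hq hfp hfq
  -- Rolle on the segment from q to p
  set γ : ℝ → EuclideanSpace ℝ (Fin n) := fun s => q + s • (p - q) with hγ
  have hγball : ∀ s ∈ Icc (0:ℝ) 1, γ s ∈ ball x₀ r := by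
    intro s hs
    have := (convex_ball x₀ r) hq hp (a := 1 - s) (b := s) (by linarith [hs.2]) hs.1
      (by ring)
    convert this using 1
    rw [hγ]
    simp only
    module
  have hderiv : ∀ s ∈ Ioo (0:ℝ) 1, HasDerivAt (fun s => f (γ s))
      ((fderiv ℝ f (γ s)) (p - q)) s := by
    intro s _
    have h1 : HasDerivAt γ (p - q) s := by
      have : HasDerivAt (fun s : ℝ => s • (p - q)) (p - q) s := by
        simpa using (hasDerivAt_id s).smul_const (p - q)
      simpa [hγ] using this.const_add q
    exact ((hf.differentiable (by simp) _).hasFDerivAt).comp_hasDerivAt s h1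
  have hcont : ContinuousOn (fun s => f (γ s)) (Icc 0 1) := by
    apply Continuous.continuousOn
    exact hf.continuous.comp (continuous_const.add (continuous_id.smul continuous_const))
  have h01 : f (γ 0) = f (γ 1) := by
    rw [hγ]; simp [hfp, hfq]
  obtain ⟨s, hsIoo, hs⟩ := exists_deriv_eq_zero one_pos hcont h01
  have hds : (fderiv ℝ f (γ s)) (p - q) = 0 := by
    rw [← (hderiv s hsIoo).deriv]
    exact hs
  -- decompose p - q
  set t := (inner ℝ v (p - q) : ℝ) with ht
  set wp := (p - q) - t • v with hwp
  obtain ⟨hgL, hgc2⟩ := hball (γ s) (hγball s ⟨hsIoo.1.le, hsIoo.2.le⟩)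
  have hsplit : t * (fderiv ℝ f (γ s)) v + (fderiv ℝ f (γ s)) wp = 0 := by
    have : (p - q) = t • v + wp := by rw [hwp]; abel
    calc t * (fderiv ℝ f (γ s)) v + (fderiv ℝ f (γ s)) wp
        = (fderiv ℝ f (γ s)) (t • v + wp) := by
          simp only [map_add, _root_.map_smul, smul_eq_mul]
      _ = 0 := by rw [← this]; exact hds
  have htle : |t| ≤ (2*L/c) * ‖wp‖ := by
    have h1 : |t| * |(fderiv ℝ f (γ s)) v| = |(fderiv ℝ f (γ s)) wp| := by
      rw [← abs_mul]
      have : t * (fderiv ℝ f (γ s)) v = -((fderiv ℝ f (γ s)) wp) := by linarith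
      rw [this, abs_neg]
    have h2 : |(fderiv ℝ f (γ s)) wp| ≤ L * ‖wp‖ := by
      calc |(fderiv ℝ f (γ s)) wp| = ‖(fderiv ℝ f (γ s)) wp‖ := rfl
        _ ≤ ‖fderiv ℝ f (γ s)‖ * ‖wp‖ := ContinuousLinearMap.le_opNorm _ _
        _ ≤ L * ‖wp‖ := by gcongr
    have h3 : |t| * (c/2) ≤ L * ‖wp‖ := by
      calc |t| * (c/2) ≤ |t| * |(fderiv ℝ f (γ s)) v| := by gcongr
        _ = |(fderiv ℝ f (γ s)) wp| := h1
        _ ≤ L * ‖wp‖ := h2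
    have h5 : |t| ≤ (L * ‖wp‖) / (c/2) := (le_div_iff₀ (by positivity)).mpr (by linarith)
    calc |t| ≤ (L * ‖wp‖)/(c/2) := h5
      _ = (2*L/c) * ‖wp‖ := by field_simp
  -- Pythagoras
  have hvwp : (inner ℝ v wp : ℝ) = 0 := by
    rw [hwp, inner_sub_right, real_inner_smul_right, real_inner_self_eq_norm_sq, hvnorm, ht]
    ring
  have hpyth : ‖p - q‖^2 = t^2 + ‖wp‖^2 := by
    have hdecomp : p - q = t • v + wp := by rw [hwp]; abel
    rw [hdecomp, norm_add_sq_real, real_inner_smul_left, hvwp, norm_smul, hvnorm]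
    simp [sq_abs]
  have hKRnn : 0 ≤ KR := Real.sqrt_nonneg _
  rw [Real.coe_toNNReal _ hKRnn]
  have h4 : ‖p - q‖^2 ≤ KR^2 * ‖wp‖^2 := by
    rw [hKR, Real.sq_sqrt (by positivity)]
    have : t^2 ≤ (2*L/c)^2 * ‖wp‖^2 := by
      rw [← mul_pow]
      calc t^2 = |t|^2 := (sq_abs t).symm
        _ ≤ ((2*L/c) * ‖wp‖)^2 := by
            apply sq_le_sq' _ htle
            have h6 : 0 ≤ (2*L/c) * ‖wp‖ := by positivity
            linarith [abs_nonneg t]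
    have expand : (1 + (2*L/c)^2) * ‖wp‖^2 = ‖wp‖^2 + (2*L/c)^2*‖wp‖^2 := by ring
    linarith [hpyth]
  calc ‖p - q‖ = Real.sqrt (‖p - q‖^2) := by rw [Real.sqrt_sq (norm_nonneg _)]
    _ ≤ Real.sqrt (KR^2 * ‖wp‖^2) := Real.sqrt_le_sqrt h4
    _ = KR * ‖wp‖ := by
        rw [Real.sqrt_mul (sq_nonneg _), Real.sqrt_sq hKRnn, Real.sqrt_sq (norm_nonneg _)]

lemma local_piece_bound {n : ℕ} (hn : 3 ≤ n) {S : Set (EuclideanSpace ℝ (Fin n))}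
    (hS : IsCompactSmoothHypersurface S) {x₀ : EuclideanSpace ℝ (Fin n)} (hx₀ : x₀ ∈ S) :
    ∃ r > 0, ∃ Cx : ℝ≥0∞, Cx ≠ ⊤ ∧ ∀ (y : EuclideanSpace ℝ (Fin n)) (ρ : ℝ), 0 ≤ ρ →
      μH[(n:ℝ)-1] (S ∩ ball x₀ r ∩ closedBall y ρ) ≤ Cx * ENNReal.ofReal ((2*ρ)^(n-1)) := by
  obtain ⟨U, hU, hx₀U, f, hf, hf', hSU⟩ := hS.2 x₀ hx₀
  obtain ⟨r, hrpos, hrU, v, hv, Kc, hKc⟩ := local_graph_est hU hf hx₀U (hf' x₀ hx₀U)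
  have hd : (0:ℝ) ≤ (n:ℝ) - 1 := by
    have : (3:ℝ) ≤ (n:ℝ) := by exact_mod_cast hn
    linarith
  refine ⟨r, hrpos, (Kc : ℝ≥0∞) ^ ((n:ℝ)-1) * ((Real.sqrt (n-1)).toNNReal : ℝ≥0∞) ^ (((n-1:ℕ)):ℝ),
    ?_, ?_⟩
  · exact ENNReal.mul_ne_top (ENNReal.rpow_ne_top_of_nonneg hd ENNReal.coe_ne_top)
      (ENNReal.rpow_ne_top_of_nonneg (Nat.cast_nonneg _) ENNReal.coe_ne_top)
  · intro y ρ hρ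
    have hzero : ∀ p ∈ S ∩ ball x₀ r, f p = 0 := by
      intro p hp
      have : p ∈ S ∩ U := ⟨hp.1, hrU hp.2⟩
      rw [hSU] at this
      exact this.2
    have hK : ∀ p ∈ S ∩ ball x₀ r, ∀ q ∈ S ∩ ball x₀ r,
        ‖p - q‖ ≤ Kc * ‖(p - q) - (inner ℝ v (p - q) : ℝ) • v‖ := by
      intro p hp q hq
      exact hKc p hp.2 q hq.2 (hzero p hp) (hzero q hq)
    have := hausdorff_graph_piece_le hn hv Kc hK y ρ hρ
    calc μH[(n:ℝ)-1] (S ∩ ball x₀ r ∩ closedBall y ρ) ≤ _ := this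
      _ = (Kc : ℝ≥0∞) ^ ((n:ℝ)-1) * ((Real.sqrt (n-1)).toNNReal : ℝ≥0∞) ^ (((n-1:ℕ)):ℝ)
          * ENNReal.ofReal ((2*ρ)^(n-1)) := by ring

lemma surf_ball_bound {n : ℕ} (hn : 3 ≤ n) {S : Set (EuclideanSpace ℝ (Fin n))}
    (hS : IsCompactSmoothHypersurface S) (M : ℝ) (hM : 0 < M) :
    ∃ C : ℝ≥0∞, C ≠ ⊤ ∧ ∀ (y : EuclideanSpace ℝ (Fin n)) (ρ : ℝ), 0 < ρ → ρ ≤ M →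
      μH[(n:ℝ)-1] (S ∩ closedBall y ρ) ≤ C * ENNReal.ofReal (ρ^(n-1)) := by
  classical
  rcases eq_empty_or_nonempty S with hSe | hSne
  · exact ⟨1, ENNReal.one_ne_top, fun y ρ h1 h2 => by simp [hSe]⟩
  -- choose local data
  choose! r hrpos Cx hCxtop hCx using fun x (hx : x ∈ S) => local_piece_bound hn hS hx
  -- finite subcover
  obtain ⟨t, htS, htcov⟩ := hS.1.elim_nhds_subcover (fun x => ball x (r x / 2))
    (fun x hx => ball_mem_nhds x (by linarith [hrpos x hx]))
  have htne : t.Nonempty := by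
    by_contra h
    rw [Finset.not_nonempty_iff_eq_empty] at h
    obtain ⟨z, hz⟩ := hSne
    have := htcov hz
    simp [h] at this
  set ρ₀ : ℝ := min M (t.inf' htne (fun x => r x / 4)) with hρ₀
  have hρ₀pos : 0 < ρ₀ := by
    rw [hρ₀]
    apply lt_min hM
    rw [Finset.lt_inf'_iff]
    intro x hx
    linarith [hrpos x (htS x hx)]
  -- total measure is finite
  set Ctot : ℝ≥0∞ := ∑ x ∈ t, Cx x * ENNReal.ofReal ((2 * r x)^(n-1)) with hCtot
  have hCtot_ne : Ctot ≠ ⊤ := by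
    rw [hCtot]
    refine ENNReal.sum_ne_top.mpr fun x hx => ?_
    exact ENNReal.mul_ne_top (hCxtop x (htS x hx)) ENNReal.ofReal_ne_top
  have htotal : μH[(n:ℝ)-1] S ≤ Ctot := by
    have hcov2 : S ⊆ ⋃ x ∈ t, (S ∩ ball x (r x) ∩ closedBall x (r x)) := by
      intro z hz
      have := htcov hz
      rw [mem_iUnion₂] at this ⊢
      obtain ⟨x, hxt, hzx⟩ := this
      have h1 : r x / 2 ≤ r x := by linarith [hrpos x (htS x hxt)]
      exact ⟨x, hxt, ⟨⟨hz, ball_subset_ball h1 hzx⟩,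
        ball_subset_closedBall (ball_subset_ball h1 hzx)⟩⟩
    calc μH[(n:ℝ)-1] S ≤ μH[(n:ℝ)-1] (⋃ x ∈ t, (S ∩ ball x (r x) ∩ closedBall x (r x))) :=
          measure_mono hcov2
      _ ≤ ∑ x ∈ t, μH[(n:ℝ)-1] (S ∩ ball x (r x) ∩ closedBall x (r x)) :=
          measure_biUnion_finset_le _ _
      _ ≤ Ctot := by
          rw [hCtot]
          exact Finset.sum_le_sum fun x hx => hCx x (htS x hx) x (r x) (hrpos x (htS x hx)).le
  set Csum : ℝ≥0∞ := ∑ x ∈ t, Cx x with hCsum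
  have hCsum_ne : Csum ≠ ⊤ := ENNReal.sum_ne_top.mpr fun x hx => hCxtop x (htS x hx)
  set C₂ : ℝ≥0∞ := Ctot / ENNReal.ofReal (ρ₀^(n-1)) with hC₂
  have hρ₀pow : ENNReal.ofReal (ρ₀^(n-1)) ≠ 0 := by
    simp only [ne_eq, ENNReal.ofReal_eq_zero, not_le]
    positivity
  have hC₂ne : C₂ ≠ ⊤ := by
    rw [hC₂]
    exact (ENNReal.div_lt_top hCtot_ne hρ₀pow).ne
  refine ⟨Csum * ENNReal.ofReal (4^(n-1)) + C₂, ?_, ?_⟩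
  · exact ENNReal.add_ne_top.mpr ⟨ENNReal.mul_ne_top hCsum_ne ENNReal.ofReal_ne_top, hC₂ne⟩
  intro y ρ hρpos hρM
  by_cases hcase : ρ ≤ ρ₀
  · rcases eq_empty_or_nonempty (S ∩ closedBall y ρ) with hemp | ⟨z, hzS, hzB⟩
    · simp [hemp]
    have hzcov := htcov hzS
    rw [mem_iUnion₂] at hzcov
    obtain ⟨x, hxt, hzx⟩ := hzcov
    have hρ₀x : ρ₀ ≤ r x / 4 := le_trans (min_le_right _ _) (Finset.inf'_le _ hxt)
    have hsub : S ∩ closedBall y ρ ⊆ S ∩ ball x (r x) ∩ closedBall z (2*ρ) := by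
      intro w hw
      have hwz : dist w z ≤ 2*ρ := by
        calc dist w z ≤ dist w y + dist y z := dist_triangle _ _ _
          _ ≤ ρ + ρ := add_le_add hw.2 (by rw [dist_comm]; exact hzB)
          _ = 2*ρ := by ring
      have hwx : dist w x < r x := by
        calc dist w x ≤ dist w z + dist z x := dist_triangle _ _ _
          _ < 2*ρ + r x / 2 := by
              have := mem_ball.mp hzx
              linarith [hwz]
          _ ≤ r x := by linarith [hρ₀x, hcase]
      exact ⟨⟨hw.1, mem_ball.mpr hwx⟩, mem_closedBall.mpr hwz⟩
    have h2ρ : (0:ℝ) ≤ 2*ρ := by linarith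
    calc μH[(n:ℝ)-1] (S ∩ closedBall y ρ)
        ≤ μH[(n:ℝ)-1] (S ∩ ball x (r x) ∩ closedBall z (2*ρ)) := measure_mono hsub
      _ ≤ Cx x * ENNReal.ofReal ((2*(2*ρ))^(n-1)) := hCx x (htS x hxt) z (2*ρ) h2ρ
      _ ≤ Csum * ENNReal.ofReal (4^(n-1)) * ENNReal.ofReal (ρ^(n-1)) := by
          have he : ((2*(2*ρ)):ℝ)^(n-1) = 4^(n-1) * ρ^(n-1) := by
            rw [← mul_pow]; ring_nf
          rw [he, ENNReal.ofReal_mul (by positivity)]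
          rw [← mul_assoc]
          gcongr
          exact Finset.single_le_sum (f := fun x => Cx x) (fun _ _ => by positivity) hxt
      _ ≤ (Csum * ENNReal.ofReal (4^(n-1)) + C₂) * ENNReal.ofReal (ρ^(n-1)) := by
          gcongr
          exact le_self_add
  · push_neg at hcase
    calc μH[(n:ℝ)-1] (S ∩ closedBall y ρ) ≤ μH[(n:ℝ)-1] S :=
          measure_mono inter_subset_left
      _ ≤ Ctot := htotal
      _ = C₂ * ENNReal.ofReal (ρ₀^(n-1)) := by
          rw [hC₂, ENNReal.div_mul_cancel hρ₀pow ENNReal.ofReal_ne_top]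
      _ ≤ C₂ * ENNReal.ofReal (ρ^(n-1)) := by
          have : ρ₀^(n-1) ≤ ρ^(n-1) := pow_le_pow_left₀ hρ₀pos.le hcase.le _
          exact mul_le_mul_right (ENNReal.ofReal_le_ofReal this) _
      _ ≤ (Csum * ENNReal.ofReal (4^(n-1)) + C₂) * ENNReal.ofReal (ρ^(n-1)) := by
          gcongr
          exact le_add_self

set_option maxHeartbeats 1000000 in
lemma kernel_lintegral_le {n : ℕ} (hn : 3 ≤ n) (μ : Measure (EuclideanSpace ℝ (Fin n)))
    (c : EuclideanSpace ℝ (Fin n)) {R : ℝ} (hR : 0 < R) {k : ℕ} (hkn : n - 2 < k)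
    {Cb : ℝ≥0∞}
    (hball : ∀ ρ : ℝ, 0 < ρ → ρ ≤ R → μ (closedBall c ρ) ≤ Cb * ENNReal.ofReal (ρ^k))
    (g : EuclideanSpace ℝ (Fin n) → ℂ)
    (hg0 : ∀ z, R < ‖c - z‖ → g z = 0)
    (hgle : ∀ z, ‖g z‖ ≤ ‖c - z‖ ^ (-((n:ℝ)-2))) :
    ∫⁻ z, ‖g z‖₊ ∂μ ≤ Cb * ENNReal.ofReal (2^(n+1) * R^(k-(n-2))) := by
  set e' : ℕ := n - 2 with he'
  have h2n : 2 ≤ n := by omega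
  have he : ((e' : ℕ) : ℝ) = (n:ℝ) - 2 := by rw [he']; push_cast [h2n]; ring
  have hek : e' + 1 ≤ k := by omega
  have h3R : (3:ℝ) ≤ (n:ℝ) := by exact_mod_cast hn
  set A : ℕ → Set (EuclideanSpace ℝ (Fin n)) :=
    fun j => {z | (1/2:ℝ)^(j+1) * R < dist c z} ∩ closedBall c ((1/2:ℝ)^j * R) with hA
  have hmeasA : ∀ j, MeasurableSet (A j) :=
    fun j => ((isOpen_lt continuous_const (continuous_const.dist continuous_id)).measurableSet).inter
      measurableSet_closedBall
  have hcover : (fun z => (‖g z‖₊ : ℝ≥0∞)) = Set.indicator (⋃ j, A j)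
      (fun z => (‖g z‖₊ : ℝ≥0∞)) := by
    funext z
    by_cases hz : z ∈ ⋃ j, A j
    · rw [Set.indicator_of_mem hz]
    · rw [Set.indicator_of_notMem hz]
      suffices hsuff : g z = 0 by simp [hsuff]
      rcases lt_or_ge R ‖c - z‖ with h | h
      · exact hg0 z h
      rcases eq_or_lt_of_le (norm_nonneg (c - z)) with h0 | h0
      · have h1 : ‖g z‖ ≤ 0 := by
          have h2 := hgle z
          rw [← h0, Real.zero_rpow (by intro hc; linarith)] at h2
          exact h2
        exact norm_le_zero_iff.mp h1
      exfalso
      apply hz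
      have hex : ∃ j : ℕ, (1/2:ℝ)^j * R < ‖c - z‖ := by
        obtain ⟨j, hj⟩ := exists_pow_lt_of_lt_one (div_pos h0 hR) (by norm_num : (1/2:ℝ) < 1)
        exact ⟨j, (lt_div_iff₀ hR).mp hj⟩
      set jm := Nat.find hex with hjm
      have hspec : (1/2:ℝ)^jm * R < ‖c - z‖ := Nat.find_spec hex
      have hjm0 : jm ≠ 0 := by
        intro h0'
        rw [h0'] at hspec
        simp at hspec
        linarith
      have hjlt : jm - 1 < jm := by omega
      have hmin : ¬ ((1/2:ℝ)^(jm-1) * R < ‖c - z‖) := Nat.find_min hex hjlt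
      push_neg at hmin
      refine mem_iUnion.mpr ⟨jm - 1, ?_, ?_⟩
      · show (1/2:ℝ)^((jm-1)+1) * R < dist c z
        rw [dist_eq_norm]
        have : (jm - 1) + 1 = jm := by omega
        rw [this]
        exact hspec
      · rw [mem_closedBall, dist_comm, dist_eq_norm]
        exact hmin
  -- bound on each annulus
  have hterm : ∀ j : ℕ, ∫⁻ z in A j, ‖g z‖₊ ∂μ
      ≤ Cb * ENNReal.ofReal (2^e' * R^(k-e') * (1/2)^j) := by
    intro j
    set s : ℝ := (1/2:ℝ)^(j+1) * R with hs
    set ρj : ℝ := (1/2:ℝ)^j * R with hρj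
    have hspos : 0 < s := by positivity
    have hρpos : 0 < ρj := by positivity
    have hρle : ρj ≤ R := by
      rw [hρj]
      calc (1/2:ℝ)^j * R ≤ 1 * R := by
            apply mul_le_mul_of_nonneg_right _ hR.le
            exact pow_le_one₀ (by norm_num) (by norm_num)
        _ = R := one_mul R
    have hptwise : ∀ z ∈ A j, (‖g z‖₊ : ℝ≥0∞) ≤ ENNReal.ofReal ((s^e')⁻¹) := by
      intro z hz
      have hsd : s < ‖c - z‖ := by
        have h5 : (1/2:ℝ)^(j+1) * R < dist c z := hz.1
        rwa [dist_eq_norm] at h5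
      rw [show (‖g z‖₊ : ℝ≥0∞) = ENNReal.ofReal ‖g z‖ by rw [← coe_nnnorm, ENNReal.ofReal_coe_nnreal]]
      apply ENNReal.ofReal_le_ofReal
      calc ‖g z‖ ≤ ‖c - z‖ ^ (-((n:ℝ)-2)) := hgle z
        _ = (‖c - z‖ ^ ((n:ℝ)-2))⁻¹ := by
            rw [Real.rpow_neg (norm_nonneg _)]
        _ ≤ (s ^ ((n:ℝ)-2))⁻¹ := by
            apply inv_anti₀ (Real.rpow_pos_of_pos hspos _)
            exact Real.rpow_le_rpow hspos.le hsd.le (by linarith)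
        _ = (s^e')⁻¹ := by rw [← he, Real.rpow_natCast]
    calc ∫⁻ z in A j, ‖g z‖₊ ∂μ
        ≤ ∫⁻ _z in A j, ENNReal.ofReal ((s^e')⁻¹) ∂μ := setLIntegral_mono' (hmeasA j) hptwise
      _ = ENNReal.ofReal ((s^e')⁻¹) * μ (A j) := setLIntegral_const _ _
      _ ≤ ENNReal.ofReal ((s^e')⁻¹) * (Cb * ENNReal.ofReal (ρj^k)) := by
          apply mul_le_mul_right
          exact le_trans (measure_mono inter_subset_right) (hball ρj hρpos hρle)
      _ = Cb * ENNReal.ofReal ((s^e')⁻¹ * ρj^k) := by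
          rw [ENNReal.ofReal_mul (by positivity)]
          ring
      _ ≤ Cb * ENNReal.ofReal (2^e' * R^(k-e') * (1/2)^j) := by
          apply mul_le_mul_right
          apply ENNReal.ofReal_le_ofReal
          rw [inv_mul_le_iff₀ (by positivity)]
          have hlhs : ρj^k = (1/2:ℝ)^(j*k) * R^k := by rw [hρj, mul_pow, ← pow_mul]
          have hse : s^e' = (1/2:ℝ)^((j+1)*e') * R^e' := by rw [hs, mul_pow, ← pow_mul]
          have hrhs : s^e' * (2^e' * R^(k-e') * (1/2)^j) = (1/2:ℝ)^(j*e'+j) * R^k := by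
            rw [hse]
            have h1 : (j+1)*e' = j*e' + e' := by ring
            rw [h1, pow_add]
            have h2 : ((1/2:ℝ))^e' * 2^e' = 1 := by
              rw [← mul_pow]; norm_num
            have h3 : (R:ℝ)^e' * R^(k-e') = R^k := by
              rw [← pow_add]; congr 1; omega
            calc (1/2:ℝ)^(j*e') * (1/2)^e' * R^e' * (2^e' * R^(k-e') * (1/2)^j)
                = ((1/2:ℝ)^e' * 2^e') * ((1/2)^(j*e') * (1/2)^j) * (R^e' * R^(k-e')) := by ring
              _ = (1/2:ℝ)^(j*e'+j) * R^k := by rw [h2, h3, ← pow_add]; ring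
          rw [hlhs, hrhs]
          apply mul_le_mul_of_nonneg_right _ (by positivity)
          apply pow_le_pow_of_le_one (by norm_num) (by norm_num)
          calc j*e' + j = j*(e'+1) := by ring
            _ ≤ j*k := Nat.mul_le_mul_left j hek
  -- sum up
  calc ∫⁻ z, ‖g z‖₊ ∂μ = ∫⁻ z in ⋃ j, A j, ‖g z‖₊ ∂μ := by
        conv_lhs => rw [hcover]
        rw [lintegral_indicator (MeasurableSet.iUnion hmeasA)]
    _ ≤ ∑' j, ∫⁻ z in A j, ‖g z‖₊ ∂μ := lintegral_iUnion_le _ _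
    _ ≤ ∑' j, Cb * ENNReal.ofReal (2^e' * R^(k-e') * (1/2)^j) := ENNReal.tsum_le_tsum hterm
    _ = Cb * ENNReal.ofReal (2^e' * R^(k-e')) * ∑' j : ℕ, (ENNReal.ofReal (1/2))^j := by
        rw [← ENNReal.tsum_mul_left]
        congr 1
        funext j
        rw [ENNReal.ofReal_mul (by positivity), ENNReal.ofReal_pow (by norm_num), mul_assoc]
    _ = Cb * ENNReal.ofReal (2^e' * R^(k-e')) * 2 := by
        congr 1
        rw [ENNReal.tsum_geometric]
        have h1 : ENNReal.ofReal (1/2) = 2⁻¹ := by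
          rw [show (1/2 : ℝ) = 2⁻¹ by norm_num, ENNReal.ofReal_inv_of_pos (by norm_num)]
          norm_num
        rw [h1, ENNReal.one_sub_inv_two]
        simp
    _ ≤ Cb * ENNReal.ofReal (2^(n+1) * R^(k-(n-2))) := by
        rw [mul_comm _ (2:ℝ≥0∞), ← mul_assoc, mul_comm (2:ℝ≥0∞) Cb, mul_assoc]
        apply mul_le_mul_right
        rw [show (2:ℝ≥0∞) = ENNReal.ofReal (2:ℝ) by norm_num, ← ENNReal.ofReal_mul (by norm_num)]
        apply ENNReal.ofReal_le_ofReal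
        have h4 : (2:ℝ) * (2^e' * R^(k-e')) = 2^(e'+1) * R^(k-e') := by ring
        rw [h4, ← he']
        apply mul_le_mul_of_nonneg_right _ (by positivity)
        apply pow_le_pow_right₀ (by norm_num)
        omega

set_option maxHeartbeats 2000000 in
/-- for `n ≥ 3`, a kernel supported in `{|x−y| ≤ Mλ⁻¹}` with
`|K⁰(x,y)| ≤ |x−y|^{-(n-2)}` maps `L²(ℝⁿ)` to `L²(Σ)` with norm `≲ λ^{-3/2}`. -/
theorem statement7 (n : ℕ) (hn : 3 ≤ n) (M : ℝ) (hM : 0 < M)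
    (S : Set (EuclideanSpace ℝ (Fin n))) (hS : IsCompactSmoothHypersurface S) :
    ∃ C : ℝ, 0 < C ∧
      ∀ lam : ℝ, 1 ≤ lam →
      ∀ K : EuclideanSpace ℝ (Fin n) → EuclideanSpace ℝ (Fin n) → ℂ,
        Measurable (Function.uncurry K) →
        (∀ x y, M * lam⁻¹ < ‖x - y‖ → K x y = 0) →
        (∀ x y, ‖K x y‖ ≤ ‖x - y‖ ^ (-((n : ℝ) - 2))) →
      ∀ u : EuclideanSpace ℝ (Fin n) → ℂ, Measurable u →
        eLpNorm (fun x => ∫ y, K x y * u y) 2 (surfMeasure S)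
          ≤ ENNReal.ofReal (C * lam ^ (-(3 : ℝ) / 2)) * eLpNorm u 2 volume := by
  obtain ⟨Cσ, hCσtop, hCσ⟩ := surf_ball_bound hn hS M hM
  have hSmeas : MeasurableSet S := hS.1.isClosed.measurableSet
  set σ := surfMeasure S with hσ
  have hσball : ∀ c (ρ : ℝ), 0 < ρ → ρ ≤ M →
      σ (closedBall c ρ) ≤ Cσ * ENNReal.ofReal (ρ^(n-1)) := by
    intro c ρ h1 h2
    rw [hσ, surfMeasure, Measure.restrict_apply' hSmeas, inter_comm]
    exact hCσ c ρ h1 h2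
  -- σ is a finite measure
  haveI hfin : IsFiniteMeasure σ := by
    constructor
    obtain ⟨t, htS, htcov⟩ := hS.1.elim_nhds_subcover (fun x => ball x M)
      (fun x _ => ball_mem_nhds x hM)
    have huniv : σ univ = μH[(n:ℝ)-1] S := by
      rw [hσ, surfMeasure, Measure.restrict_apply MeasurableSet.univ, univ_inter]
    rw [huniv]
    have hsub : S ⊆ ⋃ x ∈ t, (S ∩ closedBall x M) := by
      intro z hz
      have h1 := htcov hz
      rw [mem_iUnion₂] at h1 ⊢
      obtain ⟨x, hxt, hx⟩ := h1
      exact ⟨x, hxt, hz, ball_subset_closedBall hx⟩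
    calc μH[(n:ℝ)-1] S ≤ μH[(n:ℝ)-1] (⋃ x ∈ t, (S ∩ closedBall x M)) := measure_mono hsub
      _ ≤ ∑ x ∈ t, μH[(n:ℝ)-1] (S ∩ closedBall x M) := measure_biUnion_finset_le _ _
      _ ≤ ∑ _x ∈ t, Cσ * ENNReal.ofReal (M^(n-1)) :=
          Finset.sum_le_sum fun x _ => hCσ x M hM le_rfl
      _ < ⊤ := by
          apply ENNReal.sum_lt_top.mpr
          intro x _
          exact ENNReal.mul_lt_top hCσtop.lt_top ENNReal.ofReal_lt_top
  -- the constant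
  set volb : ℝ≥0∞ := volume (ball (0 : EuclideanSpace ℝ (Fin n)) 1) with hvolb
  have hvolb_ne : volb ≠ ⊤ := measure_ball_lt_top.ne
  set D : ℝ≥0∞ := volb * Cσ * ENNReal.ofReal ((4:ℝ)^(n+1) * M^3) with hD
  have hD_ne : D ≠ ⊤ :=
    ENNReal.mul_ne_top (ENNReal.mul_ne_top hvolb_ne hCσtop) ENNReal.ofReal_ne_top
  have hDh_ne : D ^ (1/2:ℝ) ≠ ⊤ := ENNReal.rpow_ne_top_of_nonneg (by norm_num) hD_ne
  refine ⟨(D ^ (1/2:ℝ)).toReal + 1, by positivity, ?_⟩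
  intro lam hlam K hKm hKsupp hKle u hu
  set R : ℝ := M * lam⁻¹ with hR
  have hlampos : (0:ℝ) < lam := lt_of_lt_of_le one_pos hlam
  have hRpos : 0 < R := by
    rw [hR]; positivity
  have hRM : R ≤ M := by
    rw [hR]
    calc M * lam⁻¹ ≤ M * 1 := by
          apply mul_le_mul_of_nonneg_left _ hM.le
          exact inv_le_one_of_one_le₀ hlam
      _ = M := mul_one M
  -- Step B : sup over x of the y-integral
  set Ab : ℝ≥0∞ := volb * ENNReal.ofReal (2^(n+1) * R^2) with hAb
  have hAb_ne : Ab ≠ ⊤ := ENNReal.mul_ne_top hvolb_ne ENNReal.ofReal_ne_top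
  have stepB : ∀ x, ∫⁻ y, (‖K x y‖₊ : ℝ≥0∞) ∂volume ≤ Ab := by
    intro x
    have hball : ∀ ρ : ℝ, 0 < ρ → ρ ≤ R →
        volume (closedBall x ρ) ≤ volb * ENNReal.ofReal (ρ^n) := by
      intro ρ h1 _
      rw [Measure.addHaar_closedBall volume x h1.le, finrank_euclideanSpace_fin, mul_comm]
    have h := kernel_lintegral_le hn volume x hRpos (k := n) (by omega) hball (K x)
      (fun z hz => hKsupp x z hz) (fun z => hKle x z)
    calc ∫⁻ y, (‖K x y‖₊ : ℝ≥0∞) ∂volume ≤ volb * ENNReal.ofReal (2^(n+1) * R^(n-(n-2))) := h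
      _ = Ab := by
          rw [hAb, show n - (n-2) = 2 from by omega]
  -- Step C : sup over y of the x-integral over σ
  set Bb : ℝ≥0∞ := Cσ * ENNReal.ofReal (2^(n+1) * R^1) with hBb
  have hBb_ne : Bb ≠ ⊤ := ENNReal.mul_ne_top hCσtop ENNReal.ofReal_ne_top
  have stepC : ∀ y, ∫⁻ x, (‖K x y‖₊ : ℝ≥0∞) ∂σ ≤ Bb := by
    intro y
    have hball : ∀ ρ : ℝ, 0 < ρ → ρ ≤ R →
        σ (closedBall y ρ) ≤ Cσ * ENNReal.ofReal (ρ^(n-1)) := by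
      intro ρ h1 h2
      exact hσball y ρ h1 (h2.trans hRM)
    have h := kernel_lintegral_le hn σ y hRpos (k := n-1) (by omega) hball (fun z => K z y)
      (fun z hz => hKsupp z y (by rwa [norm_sub_rev] at hz))
      (fun z => by rw [norm_sub_rev]; exact hKle z y)
    calc ∫⁻ x, (‖K x y‖₊ : ℝ≥0∞) ∂σ ≤ Cσ * ENNReal.ofReal (2^(n+1) * R^((n-1)-(n-2))) := h
      _ = Bb := by
          rw [hBb, show (n-1) - (n-2) = 1 from by omega]
  -- Cauchy–Schwarz pointwise
  set Nf := fun x => ∫ y, K x y * u y with hNf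
  set G := fun x => ∫⁻ y, (‖K x y‖₊ : ℝ≥0∞) * (‖u y‖₊ : ℝ≥0∞)^(2:ℝ) ∂volume with hG
  have hCS : ∀ x, (‖Nf x‖₊ : ℝ≥0∞)^(2:ℝ) ≤ (∫⁻ y, (‖K x y‖₊ : ℝ≥0∞) ∂volume) * G x := by
    intro x
    have hKxm : Measurable (K x) := hKm.of_uncurry_left
    have h1 : (‖Nf x‖₊ : ℝ≥0∞) ≤ ∫⁻ y, (‖K x y‖₊ : ℝ≥0∞) * (‖u y‖₊ : ℝ≥0∞) ∂volume := by
      calc (‖Nf x‖₊ : ℝ≥0∞) ≤ ∫⁻ y, (‖K x y * u y‖₊ : ℝ≥0∞) ∂volume :=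
            enorm_integral_le_lintegral_enorm _
        _ = ∫⁻ y, (‖K x y‖₊ : ℝ≥0∞) * (‖u y‖₊ : ℝ≥0∞) ∂volume := by
            congr 1
            funext y
            rw [nnnorm_mul]
            push_cast
            ring
    have h2 : ∫⁻ y, (‖K x y‖₊ : ℝ≥0∞) * (‖u y‖₊ : ℝ≥0∞) ∂volume
        ≤ (∫⁻ y, (‖K x y‖₊ : ℝ≥0∞) ∂volume)^(1/2:ℝ) * (G x)^(1/2:ℝ) := by
      have hconj : Real.HolderConjugate 2 2 := Real.holderConjugate_iff.mpr ⟨by norm_num, by norm_num⟩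
      have hf : AEMeasurable (fun y => ((‖K x y‖₊ : ℝ≥0∞))^(1/2:ℝ)) volume :=
        (hKxm.enorm.pow_const _).aemeasurable
      have hg : AEMeasurable (fun y => ((‖K x y‖₊ : ℝ≥0∞))^(1/2:ℝ) * (‖u y‖₊ : ℝ≥0∞)) volume :=
        ((hKxm.enorm.pow_const _).mul hu.enorm).aemeasurable
      have hH := ENNReal.lintegral_mul_le_Lp_mul_Lq volume hconj hf hg
      have hfg : ∀ y, ((‖K x y‖₊ : ℝ≥0∞))^(1/2:ℝ) * (((‖K x y‖₊ : ℝ≥0∞))^(1/2:ℝ) * (‖u y‖₊ : ℝ≥0∞))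
          = (‖K x y‖₊ : ℝ≥0∞) * (‖u y‖₊ : ℝ≥0∞) := by
        intro y
        rw [← mul_assoc, ← ENNReal.rpow_add_of_nonneg _ _ (by norm_num) (by norm_num)]
        norm_num
      have hf2 : ∀ y, (((‖K x y‖₊ : ℝ≥0∞))^(1/2:ℝ))^(2:ℝ) = (‖K x y‖₊ : ℝ≥0∞) := by
        intro y
        rw [← ENNReal.rpow_mul]
        norm_num
      have hg2 : ∀ y, (((‖K x y‖₊ : ℝ≥0∞))^(1/2:ℝ) * (‖u y‖₊ : ℝ≥0∞))^(2:ℝ)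
          = (‖K x y‖₊ : ℝ≥0∞) * (‖u y‖₊ : ℝ≥0∞)^(2:ℝ) := by
        intro y
        rw [ENNReal.mul_rpow_of_nonneg _ _ (by norm_num), ← ENNReal.rpow_mul]
        norm_num
      calc ∫⁻ y, (‖K x y‖₊ : ℝ≥0∞) * (‖u y‖₊ : ℝ≥0∞) ∂volume
          = ∫⁻ y, ((fun y => ((‖K x y‖₊ : ℝ≥0∞))^(1/2:ℝ)) *
              (fun y => ((‖K x y‖₊ : ℝ≥0∞))^(1/2:ℝ) * (‖u y‖₊ : ℝ≥0∞))) y ∂volume := by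
            congr 1
            funext y
            simp only [Pi.mul_apply]
            rw [hfg y]
        _ ≤ (∫⁻ y, (((‖K x y‖₊ : ℝ≥0∞))^(1/2:ℝ))^(2:ℝ) ∂volume)^(1/2:ℝ)
            * (∫⁻ y, (((‖K x y‖₊ : ℝ≥0∞))^(1/2:ℝ) * (‖u y‖₊ : ℝ≥0∞))^(2:ℝ) ∂volume)^(1/2:ℝ) := by
            exact hH
        _ = (∫⁻ y, (‖K x y‖₊ : ℝ≥0∞) ∂volume)^(1/2:ℝ) * (G x)^(1/2:ℝ) := by
            have e1 : ∫⁻ y, (((‖K x y‖₊ : ℝ≥0∞))^(1/2:ℝ))^(2:ℝ) ∂volume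
                = ∫⁻ y, (‖K x y‖₊ : ℝ≥0∞) ∂volume := lintegral_congr fun y => hf2 y
            have e2 : ∫⁻ y, (((‖K x y‖₊ : ℝ≥0∞))^(1/2:ℝ) * (‖u y‖₊ : ℝ≥0∞))^(2:ℝ) ∂volume
                = G x := by
              rw [hG]
              exact lintegral_congr fun y => hg2 y
            rw [e1, e2]
    calc (‖Nf x‖₊ : ℝ≥0∞)^(2:ℝ)
        ≤ ((∫⁻ y, (‖K x y‖₊ : ℝ≥0∞) ∂volume)^(1/2:ℝ) * (G x)^(1/2:ℝ))^(2:ℝ) :=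
          ENNReal.rpow_le_rpow (h1.trans h2) (by norm_num)
      _ = (∫⁻ y, (‖K x y‖₊ : ℝ≥0∞) ∂volume) * G x := by
          rw [ENNReal.mul_rpow_of_nonneg _ _ (by norm_num), ← ENNReal.rpow_mul,
            ← ENNReal.rpow_mul]
          norm_num
  -- main double-integral bound
  set Iu : ℝ≥0∞ := ∫⁻ y, (‖u y‖₊ : ℝ≥0∞)^(2:ℝ) ∂volume with hIu
  have hswapm : AEMeasurable (Function.uncurry
      (fun x y => (‖K x y‖₊ : ℝ≥0∞) * (‖u y‖₊ : ℝ≥0∞)^(2:ℝ))) (σ.prod volume) := by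
    apply Measurable.aemeasurable
    exact hKm.enorm.mul (((hu.comp measurable_snd).enorm).pow_const _)
  have hmain : ∫⁻ x, (‖Nf x‖₊ : ℝ≥0∞)^(2:ℝ) ∂σ ≤ Ab * (Bb * Iu) := by
    calc ∫⁻ x, (‖Nf x‖₊ : ℝ≥0∞)^(2:ℝ) ∂σ
        ≤ ∫⁻ x, Ab * G x ∂σ := by
          apply lintegral_mono
          intro x
          exact le_trans (hCS x) (mul_le_mul_left (stepB x) _)
      _ = Ab * ∫⁻ x, G x ∂σ := lintegral_const_mul' _ _ hAb_ne
      _ = Ab * ∫⁻ y, ∫⁻ x, (‖K x y‖₊ : ℝ≥0∞) * (‖u y‖₊ : ℝ≥0∞)^(2:ℝ) ∂σ ∂volume := by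
          rw [hG]
          congr 1
          exact lintegral_lintegral_swap hswapm
      _ = Ab * ∫⁻ y, (∫⁻ x, (‖K x y‖₊ : ℝ≥0∞) ∂σ) * (‖u y‖₊ : ℝ≥0∞)^(2:ℝ) ∂volume := by
          congr 1
          congr 1
          funext y
          exact lintegral_mul_const' _ _ (ENNReal.rpow_ne_top_of_nonneg (by norm_num)
            ENNReal.coe_ne_top)
      _ ≤ Ab * ∫⁻ y, Bb * (‖u y‖₊ : ℝ≥0∞)^(2:ℝ) ∂volume := by
          apply mul_le_mul_right
          apply lintegral_mono
          intro y
          exact mul_le_mul_left (stepC y) _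
      _ = Ab * (Bb * Iu) := by
          congr 1
          exact lintegral_const_mul' _ _ hBb_ne
  -- put everything together
  have heLp : eLpNorm Nf 2 σ = (∫⁻ x, (‖Nf x‖₊ : ℝ≥0∞)^(2:ℝ) ∂σ)^(1/2:ℝ) := by
    rw [eLpNorm_eq_lintegral_rpow_enorm_toReal (by norm_num) (by norm_num)]
    norm_num
    rfl
  have heLpu : eLpNorm u 2 volume = Iu^(1/2:ℝ) := by
    rw [eLpNorm_eq_lintegral_rpow_enorm_toReal (by norm_num) (by norm_num), hIu]
    norm_num
    rfl
  -- constant computation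
  have hRR : (2:ℝ)^(n+1) * R^2 * (2^(n+1) * R^1) = ((4:ℝ)^(n+1) * M^3) * (lam⁻¹)^3 := by
    rw [hR, show ((4:ℝ))^(n+1) = 2^(n+1) * 2^(n+1) by rw [← mul_pow]; norm_num]
    ring
  have hABeq : Ab * Bb = D * ENNReal.ofReal ((lam⁻¹)^3) := by
    calc Ab * Bb
        = volb * Cσ * (ENNReal.ofReal ((4:ℝ)^(n+1) * M^3) * ENNReal.ofReal ((lam⁻¹)^3)) := by
          rw [hAb, hBb, mul_mul_mul_comm, ← ENNReal.ofReal_mul (by positivity), hRR,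
            ENNReal.ofReal_mul (by positivity)]
      _ = D * ENNReal.ofReal ((lam⁻¹)^3) := by rw [hD]; ring
  rw [heLp, heLpu]
  calc (∫⁻ x, (‖Nf x‖₊ : ℝ≥0∞)^(2:ℝ) ∂σ)^(1/2:ℝ)
      ≤ (Ab * (Bb * Iu))^(1/2:ℝ) := ENNReal.rpow_le_rpow hmain (by norm_num)
    _ = (Ab * Bb)^(1/2:ℝ) * Iu^(1/2:ℝ) := by
        rw [← mul_assoc, ENNReal.mul_rpow_of_nonneg _ _ (by norm_num : (0:ℝ) ≤ 1/2)]
    _ = (D^(1/2:ℝ) * ENNReal.ofReal (((lam⁻¹)^3)^(1/2:ℝ))) * Iu^(1/2:ℝ) := by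
        rw [hABeq, ENNReal.mul_rpow_of_nonneg _ _ (by norm_num : (0:ℝ) ≤ 1/2),
          ENNReal.ofReal_rpow_of_pos (by positivity)]
    _ ≤ ENNReal.ofReal (((D^(1/2:ℝ)).toReal + 1) * lam ^ (-(3:ℝ)/2)) * Iu^(1/2:ℝ) := by
        apply mul_le_mul_left
        have hlam32 : (((lam⁻¹):ℝ)^3)^(1/2:ℝ) = lam ^ (-(3:ℝ)/2) := by
          rw [← Real.rpow_natCast (lam⁻¹) 3, ← Real.rpow_mul (by positivity)]
          rw [Real.inv_rpow hlampos.le, ← Real.rpow_neg hlampos.le]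
          norm_num
        rw [hlam32, ENNReal.ofReal_mul (by positivity)]
        apply mul_le_mul_left
        conv_lhs => rw [← ENNReal.ofReal_toReal hDh_ne]
        apply ENNReal.ofReal_le_ofReal
        linarith [ENNReal.toReal_nonneg (a := D^(1/2:ℝ))]
end

section
/- Let n ≥ 3 and λ ≥ 1. Suppose K̃ : ℝ^n × ℝ^n → ℂ is measurable, supported in {Mλ^{-1} ≤ |x−y| ≤ 2Mλ^{-1}}, and satisfies |K̃(x,y)| ≤ C λ^{n-1}. Let Σ ⊂ ℝ^n be a compact smooth hypersurface with surface measure σ and let Ω ⊂ ℝ^n be bounded. Define Ẽu(x) = ∫_Ω K̃(x,y) u(y) dy. Then ‖Ẽu‖_{L²(Σ,σ)} ≤ C' λ^{-1/2} ‖u‖_{L²(Ω)} with C' independent of λ. -/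
open MeasureTheory
open Metric Set
open scoped ENNReal NNReal RealInnerProductSpace
set_option maxHeartbeats 1000000


lemma lip_symm (m : ℕ) : LipschitzWith ((m : NNReal) ^ ((1:ℝ)/2))
    ((WithLp.equiv 2 (∀ _ : Fin m, ℝ)).symm) := by
  have h := PiLp.antilipschitzWith_ofLp 2 (fun _ : Fin m => ℝ)
  have := h.to_rightInverse (g := (WithLp.equiv 2 (∀ _ : Fin m, ℝ)).symm)
    (fun x => by simp)
  simpa using this

lemma eucl_ball_bound (m : ℕ) (c : EuclideanSpace ℝ (Fin m)) (r : ℝ) (hr : 0 ≤ r) :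
    μH[(m : ℝ)] (closedBall c r) ≤
      (((m : NNReal) ^ ((1:ℝ)/2) : NNReal) : ℝ≥0∞) ^ (m : ℝ) * ENNReal.ofReal ((2*r) ^ m) := by
  set e := WithLp.equiv 2 (∀ _ : Fin m, ℝ) with he
  have h1 : closedBall c r = (⇑e.symm) '' (⇑e '' closedBall c r) := by
    rw [Set.image_image]; simp
  have key := (lip_symm m).hausdorffMeasure_image_le (d := (m:ℝ)) (Nat.cast_nonneg m)
    (⇑e '' closedBall c r)
  have h2 : (⇑e '' closedBall c r) ⊆ closedBall (e c) r := by
    rintro x ⟨y, hy, rfl⟩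
    have := (PiLp.lipschitzWith_ofLp 2 (fun _ : Fin m => ℝ)).dist_le_mul y c
    rw [mem_closedBall]
    simp only [NNReal.coe_one, one_mul] at this
    exact this.trans (by simpa using hy)
  have h3 : μH[(m:ℝ)] (⇑e '' closedBall c r) ≤ ENNReal.ofReal ((2*r) ^ m) := by
    refine (measure_mono h2).trans_eq ?_
    have hpi : (μH[(m:ℝ)] : Measure (∀ _ : Fin m, ℝ)) = volume := by
      simpa using (hausdorffMeasure_pi_real (ι := Fin m))
    rw [hpi]
    simpa using Real.volume_pi_closedBall (e c) hr
  calc μH[(m:ℝ)] (closedBall c r) = μH[(m:ℝ)] ((⇑e.symm) '' (⇑e '' closedBall c r)) := by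
        rw [← h1]
    _ ≤ _ := key
    _ ≤ _ := by gcongr

/-- constant for the graph lemma -/
noncomputable def graphConst (m : ℕ) : ℝ≥0∞ :=
  (2 : ℝ≥0∞) ^ (m : ℝ) *
    ((((m : NNReal) ^ ((1:ℝ)/2) : NNReal) : ℝ≥0∞) ^ (m : ℝ) * ENNReal.ofReal ((2:ℝ) ^ m))

lemma graphConst_ne_top (m : ℕ) : graphConst m ≠ ⊤ := by
  unfold graphConst
  refine ENNReal.mul_ne_top (ENNReal.rpow_ne_top_of_nonneg (by positivity) (by norm_num)) ?_
  exact ENNReal.mul_ne_top (ENNReal.rpow_ne_top_of_nonneg (by positivity) ENNReal.coe_ne_top)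
    ENNReal.ofReal_ne_top

/-- Lemma B: a set with the 2-Lipschitz-graph property over a 1-Lipschitz linear map to
`ℝ^m`, contained in a ball of radius `r`, has `μH^m` at most `graphConst m * r^m`. -/
lemma graph_hausdorff_bound {n m : ℕ} (π : EuclideanSpace ℝ (Fin n) → EuclideanSpace ℝ (Fin m))
    (hπ : ∀ a b, dist (π a) (π b) ≤ dist a b)
    (T : Set (EuclideanSpace ℝ (Fin n))) (x₀ : EuclideanSpace ℝ (Fin n)) (r : ℝ) (hr : 0 ≤ r)
    (hT : T ⊆ closedBall x₀ r)
    (hgraph : ∀ y ∈ T, ∀ y' ∈ T, dist y y' ≤ 2 * dist (π y) (π y')) :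
    μH[(m : ℝ)] T ≤ graphConst m * ENNReal.ofReal (r ^ m) := by
  rcases T.eq_empty_or_nonempty with rfl | ⟨y₀, hy₀⟩
  · simp
  classical
  set h : EuclideanSpace ℝ (Fin m) → EuclideanSpace ℝ (Fin n) :=
    fun w => if hw : ∃ y ∈ T, π y = w then hw.choose else y₀ with hdef
  have hmem : ∀ w ∈ π '' T, h w ∈ T ∧ π (h w) = w := by
    rintro w ⟨y, hy, rfl⟩
    have hw : ∃ y' ∈ T, π y' = π y := ⟨y, hy, rfl⟩
    simp only [hdef, dif_pos hw]
    exact ⟨hw.choose_spec.1, hw.choose_spec.2⟩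
  have hlip : LipschitzOnWith 2 h (π '' T) := by
    refine LipschitzOnWith.of_dist_le_mul fun w hw w' hw' => ?_
    obtain ⟨h1, h2⟩ := hmem w hw
    obtain ⟨h1', h2'⟩ := hmem w' hw'
    have := hgraph _ h1 _ h1'
    rw [h2, h2'] at this
    simpa using this
  have hsub : T ⊆ h '' (π '' T) := by
    intro y hy
    obtain ⟨h1, h2⟩ := hmem (π y) ⟨y, hy, rfl⟩
    have : dist y (h (π y)) ≤ 2 * dist (π y) (π (h (π y))) := hgraph _ hy _ h1
    rw [h2, dist_self, mul_zero] at this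
    have : y = h (π y) := by
      have := dist_nonneg (x := y) (y := h (π y))
      have heq : dist y (h (π y)) = 0 := le_antisymm ‹dist y (h (π y)) ≤ 0› this
      exact dist_eq_zero.mp heq
    exact ⟨π y, ⟨y, hy, rfl⟩, this.symm⟩
  have himg : π '' T ⊆ closedBall (π x₀) r := by
    rintro w ⟨y, hy, rfl⟩
    exact mem_closedBall.mpr ((hπ y x₀).trans (hT hy))
  calc μH[(m:ℝ)] T ≤ μH[(m:ℝ)] (h '' (π '' T)) := measure_mono hsub
    _ ≤ (2:ℝ≥0∞) ^ (m:ℝ) * μH[(m:ℝ)] (π '' T) := by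
        have := hlip.hausdorffMeasure_image_le (d := (m:ℝ)) (Nat.cast_nonneg m)
        refine this.trans (le_of_eq ?_)
        norm_num
    _ ≤ (2:ℝ≥0∞) ^ (m:ℝ) * μH[(m:ℝ)] (closedBall (π x₀) r) := mul_le_mul_right (measure_mono himg) _
    _ ≤ (2:ℝ≥0∞) ^ (m:ℝ) * ((((m : NNReal) ^ ((1:ℝ)/2) : NNReal) : ℝ≥0∞) ^ (m : ℝ) *
          ENNReal.ofReal ((2*r) ^ m)) := mul_le_mul_right (eucl_ball_bound m _ r hr) _
    _ = graphConst m * ENNReal.ofReal (r ^ m) := by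
        unfold graphConst
        rw [mul_pow, ENNReal.ofReal_mul (by positivity), mul_assoc, mul_assoc]


lemma local_graph {n : ℕ} (S : Set (EuclideanSpace ℝ (Fin n)))
    (hS : IsCompactSmoothHypersurface S) (x : EuclideanSpace ℝ (Fin n)) (hx : x ∈ S) :
    ∃ ρ : ℝ, 0 < ρ ∧ ∃ π : EuclideanSpace ℝ (Fin n) → EuclideanSpace ℝ (Fin (n-1)),
      (∀ a b, dist (π a) (π b) ≤ dist a b) ∧
      ∀ y ∈ S ∩ closedBall x ρ, ∀ y' ∈ S ∩ closedBall x ρ,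
        dist y y' ≤ 2 * dist (π y) (π y') := by
  obtain ⟨U, hUopen, hxU, f, hf, hgrad, hSU⟩ := hS.2 x hx
  set φ := fderiv ℝ f x with hφdef
  have hφ : φ ≠ 0 := hgrad x hxU
  have hφnorm : 0 < ‖φ‖ := norm_pos_iff.mpr hφ
  -- the gradient vector
  set g := (InnerProductSpace.toDual ℝ (EuclideanSpace ℝ (Fin n))).symm φ with hgdef
  have hg : g ≠ 0 := by
    simp only [hgdef, ne_eq, map_eq_zero_iff _ (LinearIsometryEquiv.injective _)]
    exact hφ
  have hgnorm : ‖g‖ = ‖φ‖ := LinearIsometryEquiv.norm_map _ _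
  have hinner : ∀ v, ⟪g, v⟫ = φ v := fun v => InnerProductSpace.toDual_symm_apply
  -- choose the radius
  have hcont : Continuous (fderiv ℝ f) := hf.continuous_fderiv (by simp)
  obtain ⟨δ, hδpos, hδ⟩ := Metric.continuousAt_iff.mp (hcont.continuousAt (x := x))
    (‖φ‖/4) (by positivity)
  obtain ⟨δ', hδ'pos, hδ'⟩ := Metric.isOpen_iff.mp hUopen x hxU
  refine ⟨min δ δ' / 2, by positivity, ?_⟩
  set ρ := min δ δ' / 2 with hρdef
  have hρlt : ρ < min δ δ' := half_lt_self (lt_min hδpos hδ'pos)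
  have hρU : closedBall x ρ ⊆ U := fun z hz => hδ' <| mem_ball.mpr <|
    ((mem_closedBall.mp hz).trans_lt hρlt).trans_le (min_le_right _ _)
  have hρδ : ∀ z ∈ closedBall x ρ, dist z x < δ := fun z hz =>
    ((mem_closedBall.mp hz).trans_lt hρlt).trans_le (min_le_left _ _)
  -- zero set property
  have hzero : ∀ y ∈ S ∩ closedBall x ρ, f y = 0 := by
    intro y hy
    have : y ∈ S ∩ U := ⟨hy.1, hρU hy.2⟩
    rw [hSU] at this
    exact this.2
  -- mean value bound
  have hMVT : ∀ y ∈ closedBall x ρ, ∀ y' ∈ closedBall x ρ, f y = 0 → f y' = 0 →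
      |φ (y - y')| ≤ ‖φ‖/4 * ‖y - y'‖ := by
    intro y hy y' hy' hfy hfy'
    have hder : ∀ z ∈ closedBall x ρ, HasFDerivWithinAt f (fderiv ℝ f z) (closedBall x ρ) z :=
      fun z _ => (hf.differentiable (by simp) z).hasFDerivAt.hasFDerivWithinAt
    have hbound : ∀ z ∈ closedBall x ρ, ‖fderiv ℝ f z - φ‖ ≤ ‖φ‖/4 := fun z hz =>
      by have := (hδ (hρδ z hz)).le; rwa [dist_eq_norm] at this
    have := (convex_closedBall x ρ).norm_image_sub_le_of_norm_hasFDerivWithin_le'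
      hder hbound hy' hy
    rw [hfy, hfy'] at this
    simpa [map_sub, abs_sub_comm] using this
  -- the hyperplane and projection
  set F := (ℝ ∙ g)ᗮ with hFdef
  have hdim : Module.finrank ℝ F = n - 1 := by
    have h1 : Module.finrank ℝ (ℝ ∙ g) = 1 := finrank_span_singleton hg
    have h2 := Submodule.finrank_add_finrank_orthogonal (K := (ℝ ∙ g))
    rw [h1, finrank_euclideanSpace_fin] at h2
    rw [← hFdef] at h2
    omega
  let ι : F ≃ₗᵢ[ℝ] EuclideanSpace ℝ (Fin (n-1)) :=
    (stdOrthonormalBasis ℝ F).repr.trans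
      (LinearIsometryEquiv.piLpCongrLeft 2 ℝ ℝ (finCongr hdim))
  refine ⟨fun y => ι (Submodule.orthogonalProjectionOnto F y), ?_, ?_⟩
  · intro a b
    have : dist (ι (Submodule.orthogonalProjectionOnto F a)) (ι (Submodule.orthogonalProjectionOnto F b)) =
        dist (Submodule.orthogonalProjectionOnto F a) (Submodule.orthogonalProjectionOnto F b) := ι.dist_map _ _
    rw [this, dist_eq_norm, dist_eq_norm, ← map_sub]
    have : ‖Submodule.orthogonalProjectionOnto F (a - b)‖ ≤ ‖a - b‖ := by
      have h := (Submodule.orthogonalProjectionOnto F).le_opNorm (a - b)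
      exact h.trans (by
        have := Submodule.orthogonalProjectionOnto_norm_le F
        nlinarith [norm_nonneg (a - b)])
    simpa using this
  · intro y hy y' hy'
    set d := y - y' with hddef
    have hMV := hMVT y hy.2 y' hy'.2 (hzero y hy) (hzero y' hy')
    -- component along g
    have hgpos : 0 < ‖g‖ := hgnorm ▸ hφnorm
    have hsplit : ‖d‖^2 = ‖((Submodule.orthogonalProjectionOnto (ℝ ∙ g) d : EuclideanSpace ℝ (Fin n)))‖^2 +
        ‖((Submodule.orthogonalProjectionOnto F d : EuclideanSpace ℝ (Fin n)))‖^2 := by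
      exact Submodule.norm_sq_eq_add_norm_sq_projection d (ℝ ∙ g)
    have hspan : ‖(Submodule.orthogonalProjectionOnto (ℝ ∙ g) d : EuclideanSpace ℝ (Fin n))‖ ≤ ‖d‖/4 := by
      have hval : ⟪g, d⟫ = φ d := hinner d
      have hrepr : ((Submodule.orthogonalProjectionOnto (ℝ ∙ g) d : EuclideanSpace ℝ (Fin n))) =
          (φ d / (‖g‖^2) : ℝ) • g := by
        rw [Submodule.coe_orthogonalProjectionOnto_apply, Submodule.starProjection_singleton, hval]
        norm_cast
      rw [hrepr, norm_smul, Real.norm_eq_abs, abs_div, abs_of_nonneg (by positivity : (0:ℝ) ≤ ‖g‖^2)]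
      have hMV' : |φ d| ≤ ‖g‖/4 * ‖d‖ := by rw [hgnorm]; exact hMV
      calc |φ d| / ‖g‖^2 * ‖g‖ = |φ d| / ‖g‖ := by field_simp
        _ ≤ (‖g‖/4 * ‖d‖) / ‖g‖ := by gcongr
        _ = ‖d‖/4 := by field_simp
    have hF : ‖d‖ ≤ 2 * ‖(Submodule.orthogonalProjectionOnto F d : EuclideanSpace ℝ (Fin n))‖ := by
      set a := ‖(Submodule.orthogonalProjectionOnto (ℝ ∙ g) d : EuclideanSpace ℝ (Fin n))‖
      set b := ‖(Submodule.orthogonalProjectionOnto F d : EuclideanSpace ℝ (Fin n))‖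
      have ha : 0 ≤ a := norm_nonneg _
      have hb : 0 ≤ b := norm_nonneg _
      have hd0 : 0 ≤ ‖d‖ := norm_nonneg _
      nlinarith [sq_nonneg (‖d‖ - 2*b), sq_nonneg (‖d‖ + 2*b)]
    have heq : dist (ι (Submodule.orthogonalProjectionOnto F y)) (ι (Submodule.orthogonalProjectionOnto F y')) =
        ‖(Submodule.orthogonalProjectionOnto F d : EuclideanSpace ℝ (Fin n))‖ := by
      rw [ι.dist_map, dist_eq_norm, ← map_sub]
      simp [hddef]
    rw [dist_eq_norm, heq]
    exact hF

lemma ahlfors {n : ℕ} (S : Set (EuclideanSpace ℝ (Fin n)))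
    (hS : IsCompactSmoothHypersurface S) :
    ∃ A : ℝ≥0∞, A ≠ ⊤ ∧ μH[((n-1 : ℕ) : ℝ)] S ≠ ⊤ ∧
      ∀ y : EuclideanSpace ℝ (Fin n), ∀ r : ℝ, 0 < r →
        μH[((n-1:ℕ):ℝ)] (S ∩ closedBall y r) ≤ A * ENNReal.ofReal (r ^ (n-1)) := by
  classical
  rcases S.eq_empty_or_nonempty with rfl | hSne
  · exact ⟨1, by simp, by simp, fun y r hr => by simp⟩
  set m := n - 1 with hm
  have hloc := fun z : S => local_graph S hS z z.2
  choose ρ hρpos π hπlip hπgraph using hloc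
  have hcover : S ⊆ ⋃ z : S, Metric.ball (z : EuclideanSpace ℝ (Fin n)) (ρ z / 2) := by
    intro x hx
    exact Set.mem_iUnion.mpr ⟨⟨x, hx⟩, Metric.mem_ball_self (by
      have := hρpos ⟨x, hx⟩; linarith)⟩
  obtain ⟨t, ht⟩ := hS.1.elim_finite_subcover _ (fun z => Metric.isOpen_ball) hcover
  have htne : t.Nonempty := by
    obtain ⟨x, hx⟩ := hSne
    obtain ⟨z, hzt, _⟩ := Set.mem_iUnion₂.mp (ht hx)
    exact ⟨z, hzt⟩
  set δ := t.inf' htne (fun z => ρ z / 2) with hδ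
  have hδpos : 0 < δ := by
    rw [hδ, Finset.lt_inf'_iff]
    intro z _
    have := hρpos z; linarith
  -- local bound: balls centered on S with radius ≤ δ
  have key1 : ∀ s ∈ S, ∀ r : ℝ, 0 < r → r ≤ δ →
      μH[(m:ℝ)] (S ∩ closedBall s r) ≤ graphConst m * ENNReal.ofReal (r ^ m) := by
    intro s hs r hr hrδ
    obtain ⟨z, hzt, hz⟩ := Set.mem_iUnion₂.mp (ht hs)
    have hδz : δ ≤ ρ z / 2 := Finset.inf'_le _ hzt
    have hsub : S ∩ closedBall s r ⊆ S ∩ closedBall (z : EuclideanSpace ℝ (Fin n)) (ρ z) := by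
      rintro w ⟨hw1, hw2⟩
      refine ⟨hw1, mem_closedBall.mpr ?_⟩
      have h1 : dist w s ≤ r := mem_closedBall.mp hw2
      have h2 : dist s z < ρ z / 2 := Metric.mem_ball.mp hz
      calc dist w (z : EuclideanSpace ℝ (Fin n)) ≤ dist w s + dist s z := dist_triangle _ _ _
        _ ≤ ρ z / 2 + ρ z / 2 := add_le_add (by linarith) h2.le
        _ = ρ z := by ring
    refine graph_hausdorff_bound (π z) (hπlip z) _ s r hr.le Set.inter_subset_right ?_
    intro y hy y' hy'
    exact hπgraph z y (hsub hy) y' (hsub hy')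
  -- total measure is finite
  have key2 : μH[(m:ℝ)] S ≠ ⊤ := by
    have hsub : S ⊆ ⋃ z ∈ t, S ∩ closedBall (z : EuclideanSpace ℝ (Fin n)) (ρ z) := by
      intro x hx
      obtain ⟨z, hzt, hz⟩ := Set.mem_iUnion₂.mp (ht hx)
      refine Set.mem_biUnion hzt ⟨hx, mem_closedBall.mpr ?_⟩
      have := Metric.mem_ball.mp hz
      have := hρpos z
      linarith
    have hle : μH[(m:ℝ)] S ≤ ∑ z ∈ t, μH[(m:ℝ)] (S ∩ closedBall (z : EuclideanSpace ℝ (Fin n)) (ρ z)) :=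
      (measure_mono hsub).trans (measure_biUnion_finset_le t _)
    refine ne_top_of_le_ne_top ?_ hle
    refine (ENNReal.sum_lt_top.mpr fun z _ => ?_).ne
    refine lt_of_le_of_lt (graph_hausdorff_bound (π z) (hπlip z) _ z (ρ z) (hρpos z).le
      Set.inter_subset_right (fun y hy y' hy' => hπgraph z y hy y' hy')) ?_
    exact ENNReal.mul_lt_top (graphConst_ne_top m).lt_top ENNReal.ofReal_lt_top
  -- combine into bound for all centers in S and all radii
  set A₁ := graphConst m + μH[(m:ℝ)] S / ENNReal.ofReal (δ ^ m) with hA₁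
  have key3 : ∀ s ∈ S, ∀ r : ℝ, 0 < r →
      μH[(m:ℝ)] (S ∩ closedBall s r) ≤ A₁ * ENNReal.ofReal (r ^ m) := by
    intro s hs r hr
    rcases le_or_gt r δ with h | h
    · exact (key1 s hs r hr h).trans (mul_le_mul_left le_self_add _)
    · have h1 : μH[(m:ℝ)] (S ∩ closedBall s r) ≤ μH[(m:ℝ)] S :=
        measure_mono Set.inter_subset_left
      have h2 : μH[(m:ℝ)] S ≤ (μH[(m:ℝ)] S / ENNReal.ofReal (δ ^ m)) * ENNReal.ofReal (r ^ m) := by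
        have hδ0 : ENNReal.ofReal (δ ^ m) ≠ 0 := by
          simp only [ne_eq, ENNReal.ofReal_eq_zero, not_le]
          positivity
        have hδt : ENNReal.ofReal (δ ^ m) ≠ ⊤ := ENNReal.ofReal_ne_top
        calc μH[(m:ℝ)] S = (μH[(m:ℝ)] S / ENNReal.ofReal (δ ^ m)) * ENNReal.ofReal (δ ^ m) := by
              rw [ENNReal.div_mul_cancel hδ0 hδt]
          _ ≤ _ := mul_le_mul_right
              (ENNReal.ofReal_le_ofReal (pow_le_pow_left₀ hδpos.le h.le m)) _
      exact (h1.trans h2).trans (mul_le_mul_left le_add_self _)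
  -- final: arbitrary centers
  refine ⟨A₁ * ENNReal.ofReal (2 ^ m), ?_, key2, ?_⟩
  · refine ENNReal.mul_ne_top ?_ ENNReal.ofReal_ne_top
    refine ENNReal.add_ne_top.mpr ⟨graphConst_ne_top m, ?_⟩
    exact (ENNReal.div_lt_top key2 (by
      simp only [ne_eq, ENNReal.ofReal_eq_zero, not_le]; positivity)).ne
  · intro y r hr
    rcases (S ∩ closedBall y r).eq_empty_or_nonempty with he | ⟨s, hs⟩
    · simp [he]
    · have hsub : S ∩ closedBall y r ⊆ S ∩ closedBall s (2 * r) := by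
        rintro w ⟨hw1, hw2⟩
        refine ⟨hw1, mem_closedBall.mpr ?_⟩
        have h1 : dist w y ≤ r := mem_closedBall.mp hw2
        have h2 : dist s y ≤ r := mem_closedBall.mp hs.2
        calc dist w s ≤ dist w y + dist y s := dist_triangle _ _ _
          _ ≤ r + r := add_le_add h1 (dist_comm y s ▸ h2)
          _ = 2 * r := by ring
      refine (measure_mono hsub).trans ?_
      refine (key3 s hs.1 (2 * r) (by linarith)).trans ?_
      rw [mul_pow, ENNReal.ofReal_mul (by positivity), mul_assoc]


/-- a kernel supported in the annulus `{Mλ⁻¹ ≤ |x−y| ≤ 2Mλ⁻¹}` and bounded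
by `Cλ^{n-1}` maps `L²(Ω)` to `L²(Σ)` with norm `≤ C' λ^{-1/2}`, uniformly in `λ ≥ 1`. -/
theorem statement13 (n : ℕ) (hn : 3 ≤ n) (M C : ℝ) (hM : 0 < M) (hC : 0 ≤ C)
    (S : Set (EuclideanSpace ℝ (Fin n))) (hS : IsCompactSmoothHypersurface S)
    (Ω : Set (EuclideanSpace ℝ (Fin n))) (hΩ : Bornology.IsBounded Ω)
    (hΩm : MeasurableSet Ω) :
    ∃ C' : ℝ, 0 < C' ∧
      ∀ lam : ℝ, 1 ≤ lam →
      ∀ K : EuclideanSpace ℝ (Fin n) → EuclideanSpace ℝ (Fin n) → ℂ,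
        Measurable (Function.uncurry K) →
        (∀ x y, ‖x - y‖ < M * lam⁻¹ ∨ 2 * M * lam⁻¹ < ‖x - y‖ → K x y = 0) →
        (∀ x y, ‖K x y‖ ≤ C * lam ^ ((n : ℝ) - 1)) →
      ∀ u : EuclideanSpace ℝ (Fin n) → ℂ, Measurable u →
        eLpNorm (fun x => ∫ y in Ω, K x y * u y) 2 (surfMeasure S)
          ≤ ENNReal.ofReal (C' * lam ^ (-(1 : ℝ) / 2)) *
            eLpNorm u 2 (volume.restrict Ω) := by
    classical
  obtain ⟨A, hAtop, hSfin, hAhl⟩ := ahlfors S hS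
  set m := n - 1 with hm
  have hm1 : 1 ≤ n := by omega
  have hcast : ((n:ℝ) - 1) = ((m : ℕ) : ℝ) := by
    rw [hm, Nat.cast_sub hm1]; norm_num
  set ν := (Measure.hausdorffMeasure ((m : ℕ) : ℝ)).restrict S with hν
  have hsurf : surfMeasure S = ν := by rw [surfMeasure, hcast]
  set volB := volume (Metric.ball (0 : EuclideanSpace ℝ (Fin n)) 1) with hvolB
  have hvolBne : volB ≠ ⊤ := measure_ball_lt_top.ne
  set B : ℝ≥0∞ := ENNReal.ofReal (C * (2*M)^n) * volB *
    (ENNReal.ofReal (C * (2*M)^m) * A) with hBdef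
  have hBne : B ≠ ⊤ := by
    refine ENNReal.mul_ne_top (ENNReal.mul_ne_top ENNReal.ofReal_ne_top hvolBne) ?_
    exact ENNReal.mul_ne_top ENNReal.ofReal_ne_top hAtop
  set C' := Real.sqrt B.toReal + 1 with hC'def
  have hC'pos : 0 < C' := by positivity
  have hBle : B ≤ ENNReal.ofReal (C' ^ 2) := by
    rw [← ENNReal.ofReal_toReal hBne]
    apply ENNReal.ofReal_le_ofReal
    have h0 : 0 ≤ B.toReal := ENNReal.toReal_nonneg
    nlinarith [Real.sq_sqrt h0, Real.sqrt_nonneg B.toReal]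
  refine ⟨C', hC'pos, ?_⟩
  intro lam hlam K hKmeas hKsupp hKbd u hu
  rw [hsurf]
  haveI : IsFiniteMeasure ν := ⟨by
    rw [hν, Measure.restrict_apply_univ]; exact hSfin.lt_top⟩
  obtain ⟨R₀, hR₀⟩ := hΩ.subset_closedBall 0
  haveI : IsFiniteMeasure (volume.restrict Ω) := ⟨by
    rw [Measure.restrict_apply_univ]
    exact lt_of_le_of_lt (measure_mono hR₀) measure_closedBall_lt_top⟩
  have hlam0 : (0:ℝ) < lam := lt_of_lt_of_le one_pos hlam
  set R := 2 * M * lam⁻¹ with hRdef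
  have hRpos : 0 < R := by positivity
  set D := ENNReal.ofReal (C * lam ^ ((n:ℝ) - 1)) with hDdef
  have hDne : D ≠ ⊤ := ENNReal.ofReal_ne_top
  have hKsec : ∀ x, Measurable (fun y => K x y) := fun x =>
    hKmeas.comp (measurable_const.prodMk measurable_id)
  have hKsec' : ∀ y, Measurable (fun x => K x y) := fun y =>
    hKmeas.comp (measurable_id.prodMk measurable_const)
  have hKle : ∀ x y, (‖K x y‖₊ : ℝ≥0∞) ≤ D := fun x y => by
    rw [hDdef, ← enorm_eq_nnnorm, ← ofReal_norm]
    exact ENNReal.ofReal_le_ofReal (hKbd x y)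
  have hKzero : ∀ x y, R < ‖x - y‖ → K x y = 0 := fun x y h =>
    hKsupp x y (Or.inr h)
  have hKptx : ∀ x y, (‖K x y‖₊ : ℝ≥0∞) ≤
      D * (Metric.closedBall x R).indicator 1 y := by
    intro x y
    by_cases hy : y ∈ Metric.closedBall x R
    · rw [Set.indicator_of_mem hy]; simpa using hKle x y
    · rw [Set.indicator_of_notMem hy, mul_zero]
      have h1 : R < dist y x := not_le.mp (fun h => hy (mem_closedBall.mpr h))
      have h2 : R < ‖x - y‖ := by rwa [dist_eq_norm, norm_sub_rev] at h1
      simp [hKzero x y h2]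
  have hKpty : ∀ x y, (‖K x y‖₊ : ℝ≥0∞) ≤
      D * (Metric.closedBall y R).indicator 1 x := by
    intro x y
    by_cases hx : x ∈ Metric.closedBall y R
    · rw [Set.indicator_of_mem hx]; simpa using hKle x y
    · rw [Set.indicator_of_notMem hx, mul_zero]
      have h1 : R < dist x y := not_le.mp (fun h => hx (mem_closedBall.mpr h))
      have h2 : R < ‖x - y‖ := by rwa [dist_eq_norm] at h1
      simp [hKzero x y h2]
  -- Schur bound 1: integral over Ω in y
  have hbound1 : ∀ x, (∫⁻ y in Ω, (‖K x y‖₊ : ℝ≥0∞) ∂volume)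
      ≤ D * (ENNReal.ofReal (R^n) * volB) := by
    intro x
    calc ∫⁻ y in Ω, (‖K x y‖₊ : ℝ≥0∞) ∂volume
        ≤ ∫⁻ y in Ω, D * (Metric.closedBall x R).indicator 1 y ∂volume :=
          lintegral_mono (fun y => hKptx x y)
      _ = D * ∫⁻ y in Ω, (Metric.closedBall x R).indicator 1 y ∂volume :=
          lintegral_const_mul' _ _ hDne
      _ ≤ D * volume (Metric.closedBall x R) := by
          refine mul_le_mul' le_rfl ?_
          rw [lintegral_indicator_one measurableSet_closedBall]
          exact Measure.restrict_le_self _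
      _ = D * (ENNReal.ofReal (R ^ n) * volB) := by
          rw [hvolB, Measure.addHaar_closedBall _ _ hRpos.le, finrank_euclideanSpace_fin]
  -- Schur bound 2: integral over the surface in x
  have hbound2 : ∀ y, (∫⁻ x, (‖K x y‖₊ : ℝ≥0∞) ∂ν) ≤ D * (A * ENNReal.ofReal (R^m)) := by
    intro y
    calc ∫⁻ x, (‖K x y‖₊ : ℝ≥0∞) ∂ν
        ≤ ∫⁻ x, D * (Metric.closedBall y R).indicator 1 x ∂ν :=
          lintegral_mono (fun x => hKpty x y)
      _ = D * ∫⁻ x, (Metric.closedBall y R).indicator 1 x ∂ν :=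
          lintegral_const_mul' _ _ hDne
      _ = D * ν (Metric.closedBall y R) := by
          rw [lintegral_indicator_one measurableSet_closedBall]
      _ ≤ D * (A * ENNReal.ofReal (R^m)) := by
          refine mul_le_mul' le_rfl ?_
          rw [hν, Measure.restrict_apply measurableSet_closedBall, Set.inter_comm]
          exact hAhl y R hRpos
  -- Cauchy–Schwarz in y for fixed x
  have hCS : ∀ x, (∫⁻ y in Ω, (‖K x y‖₊ : ℝ≥0∞) * ‖u y‖₊ ∂volume) ^ (2:ℝ) ≤
      (∫⁻ y in Ω, (‖K x y‖₊ : ℝ≥0∞) ∂volume) *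
      (∫⁻ y in Ω, (‖K x y‖₊ : ℝ≥0∞) * (‖u y‖₊ : ℝ≥0∞) ^ (2:ℝ) ∂volume) := by
    intro x
    set f : EuclideanSpace ℝ (Fin n) → ℝ≥0∞ :=
      fun y => (‖K x y‖₊ : ℝ≥0∞) ^ ((1:ℝ)/2) with hfdef
    set g : EuclideanSpace ℝ (Fin n) → ℝ≥0∞ :=
      fun y => (‖K x y‖₊ : ℝ≥0∞) ^ ((1:ℝ)/2) * ‖u y‖₊ with hgdef
    have hKm : Measurable fun y => (‖K x y‖₊ : ℝ≥0∞) := (hKsec x).enorm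
    have hfm : Measurable f := ENNReal.continuous_rpow_const.measurable.comp hKm
    have hgm : Measurable g := hfm.mul hu.enorm
    have h22 : Real.HolderConjugate 2 2 := Real.HolderConjugate.two_two
    have key := ENNReal.lintegral_mul_le_Lp_mul_Lq (volume.restrict Ω) h22
      hfm.aemeasurable hgm.aemeasurable
    have hfg : ∀ y, f y * g y = (‖K x y‖₊ : ℝ≥0∞) * ‖u y‖₊ := by
      intro y
      simp only [hfdef, hgdef]
      rw [← mul_assoc, ← ENNReal.rpow_add_of_nonneg _ _ (by norm_num) (by norm_num)]
      norm_num
    have hf2 : ∀ y, f y ^ (2:ℝ) = (‖K x y‖₊ : ℝ≥0∞) := by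
      intro y
      simp only [hfdef]
      rw [← ENNReal.rpow_mul]
      norm_num
    have hg2 : ∀ y, g y ^ (2:ℝ) = (‖K x y‖₊ : ℝ≥0∞) * (‖u y‖₊ : ℝ≥0∞) ^ (2:ℝ) := by
      intro y
      simp only [hgdef]
      rw [ENNReal.mul_rpow_of_nonneg _ _ (by norm_num : (0:ℝ) ≤ 2), ← ENNReal.rpow_mul]
      norm_num
    have key2 := ENNReal.rpow_le_rpow key (by norm_num : (0:ℝ) ≤ 2)
    rw [ENNReal.mul_rpow_of_nonneg _ _ (by norm_num : (0:ℝ) ≤ 2),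
      ← ENNReal.rpow_mul, ← ENNReal.rpow_mul,
      show ((1:ℝ)/2 * 2 : ℝ) = 1 by norm_num, ENNReal.rpow_one, ENNReal.rpow_one] at key2
    calc (∫⁻ y in Ω, (‖K x y‖₊ : ℝ≥0∞) * ‖u y‖₊ ∂volume) ^ (2:ℝ)
        = (∫⁻ y in Ω, f y * g y ∂volume) ^ (2:ℝ) := by
          congr 1
          exact lintegral_congr fun y => (hfg y).symm
      _ ≤ (∫⁻ y in Ω, f y ^ (2:ℝ) ∂volume) * (∫⁻ y in Ω, g y ^ (2:ℝ) ∂volume) := key2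
      _ = _ := by
          congr 1
          · exact lintegral_congr fun y => hf2 y
          · exact lintegral_congr fun y => hg2 y
  -- Tonelli swap
  set I := ∫⁻ y in Ω, (‖u y‖₊ : ℝ≥0∞) ^ (2:ℝ) ∂volume with hIdef
  set G : EuclideanSpace ℝ (Fin n) → ℝ≥0∞ :=
    fun x => ∫⁻ y in Ω, (‖K x y‖₊ : ℝ≥0∞) * (‖u y‖₊ : ℝ≥0∞) ^ (2:ℝ) ∂volume with hGdef
  have huy_ne : ∀ y : EuclideanSpace ℝ (Fin n), (‖u y‖₊ : ℝ≥0∞) ^ (2:ℝ) ≠ ⊤ :=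
    fun y => ENNReal.rpow_ne_top_of_nonneg (by norm_num) ENNReal.coe_ne_top
  have hswap : ∫⁻ x, G x ∂ν =
      ∫⁻ y in Ω, (∫⁻ x, (‖K x y‖₊ : ℝ≥0∞) ∂ν) * (‖u y‖₊ : ℝ≥0∞) ^ (2:ℝ) ∂volume := by
    have hmeas : AEMeasurable
        (Function.uncurry fun x y => (‖K x y‖₊ : ℝ≥0∞) * (‖u y‖₊ : ℝ≥0∞) ^ (2:ℝ))
        (ν.prod (volume.restrict Ω)) := by
      refine Measurable.aemeasurable ?_
      have h1 : Measurable fun p : EuclideanSpace ℝ (Fin n) × EuclideanSpace ℝ (Fin n) =>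
          (‖K p.1 p.2‖₊ : ℝ≥0∞) := hKmeas.enorm
      have h2 : Measurable fun p : EuclideanSpace ℝ (Fin n) × EuclideanSpace ℝ (Fin n) =>
          (‖u p.2‖₊ : ℝ≥0∞) ^ (2:ℝ) :=
        ENNReal.continuous_rpow_const.measurable.comp ((hu.comp measurable_snd).enorm)
      exact h1.mul h2
    rw [lintegral_lintegral_swap hmeas]
    refine lintegral_congr fun y => ?_
    exact lintegral_mul_const' _ _ (huy_ne y)
  -- main squared estimate
  have hmain : ∫⁻ x, (‖∫ y in Ω, K x y * u y‖₊ : ℝ≥0∞) ^ (2:ℝ) ∂ν ≤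
      (D * (ENNReal.ofReal (R^n) * volB)) * ((D * (A * ENNReal.ofReal (R^m))) * I) := by
    calc ∫⁻ x, (‖∫ y in Ω, K x y * u y‖₊ : ℝ≥0∞) ^ (2:ℝ) ∂ν
        ≤ ∫⁻ x, (D * (ENNReal.ofReal (R^n) * volB)) * G x ∂ν := by
          refine lintegral_mono fun x => ?_
          have h1 : (‖∫ y in Ω, K x y * u y‖₊ : ℝ≥0∞) ≤
              ∫⁻ y in Ω, (‖K x y‖₊ : ℝ≥0∞) * ‖u y‖₊ ∂volume := by
            refine (enorm_integral_le_lintegral_enorm _).trans_eq ?_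
            refine lintegral_congr fun y => ?_
            rw [enorm_mul]; rfl
          have h2 := ENNReal.rpow_le_rpow h1 (by norm_num : (0:ℝ) ≤ 2)
          refine h2.trans ((hCS x).trans ?_)
          exact mul_le_mul' (hbound1 x) le_rfl
      _ = (D * (ENNReal.ofReal (R^n) * volB)) * ∫⁻ x, G x ∂ν :=
          lintegral_const_mul' _ _ (by
            exact ENNReal.mul_ne_top hDne (ENNReal.mul_ne_top ENNReal.ofReal_ne_top hvolBne))
      _ = (D * (ENNReal.ofReal (R^n) * volB)) *
            ∫⁻ y in Ω, (∫⁻ x, (‖K x y‖₊ : ℝ≥0∞) ∂ν) * (‖u y‖₊ : ℝ≥0∞) ^ (2:ℝ) ∂volume := by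
          rw [hswap]
      _ ≤ (D * (ENNReal.ofReal (R^n) * volB)) * ((D * (A * ENNReal.ofReal (R^m))) * I) := by
          refine mul_le_mul' le_rfl ?_
          calc ∫⁻ y in Ω, (∫⁻ x, (‖K x y‖₊ : ℝ≥0∞) ∂ν) * (‖u y‖₊ : ℝ≥0∞) ^ (2:ℝ) ∂volume
              ≤ ∫⁻ y in Ω, (D * (A * ENNReal.ofReal (R^m))) * (‖u y‖₊ : ℝ≥0∞) ^ (2:ℝ) ∂volume :=
                lintegral_mono fun y => mul_le_mul' (hbound2 y) le_rfl
            _ = (D * (A * ENNReal.ofReal (R^m))) * I :=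
                lintegral_const_mul' _ _ (by
                  exact ENNReal.mul_ne_top hDne
                    (ENNReal.mul_ne_top hAtop ENNReal.ofReal_ne_top))
  -- arithmetic of the constants
  have hD1 : D * ENNReal.ofReal (R^n) = ENNReal.ofReal (C * (2*M)^n) * ENNReal.ofReal lam⁻¹ := by
    rw [hDdef, ← ENNReal.ofReal_mul (by positivity), ← ENNReal.ofReal_mul (by positivity)]
    congr 1
    have e1 : R ^ n = (2*M)^n * (lam⁻¹)^n := by rw [hRdef, mul_pow]
    have e2 : lam ^ ((n:ℝ)-1) * (lam⁻¹)^n = lam⁻¹ := by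
      rw [inv_pow, ← Real.rpow_natCast lam n, ← Real.rpow_neg hlam0.le,
        ← Real.rpow_add hlam0]
      rw [show (n:ℝ) - 1 + -(n:ℝ) = -1 by ring, Real.rpow_neg_one]
    calc C * lam ^ ((n:ℝ)-1) * R^n = C * (2*M)^n * (lam ^ ((n:ℝ)-1) * (lam⁻¹)^n) := by
          rw [e1]; ring
      _ = C * (2*M)^n * lam⁻¹ := by rw [e2]
  have hD2 : D * ENNReal.ofReal (R^m) = ENNReal.ofReal (C * (2*M)^m) := by
    rw [hDdef, ← ENNReal.ofReal_mul (by positivity)]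
    congr 1
    have e1 : R ^ m = (2*M)^m * (lam⁻¹)^m := by rw [hRdef, mul_pow]
    have e2 : lam ^ ((n:ℝ)-1) * (lam⁻¹)^m = 1 := by
      rw [inv_pow, ← Real.rpow_natCast lam m, ← Real.rpow_neg hlam0.le,
        ← Real.rpow_add hlam0, hcast]
      rw [show (m:ℝ) + -(m:ℝ) = 0 by ring, Real.rpow_zero]
    calc C * lam ^ ((n:ℝ)-1) * R^m = C * (2*M)^m * (lam ^ ((n:ℝ)-1) * (lam⁻¹)^m) := by
          rw [e1]; ring
      _ = C * (2*M)^m := by rw [e2]; ring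
  have hconst : (D * (ENNReal.ofReal (R^n) * volB)) * (D * (A * ENNReal.ofReal (R^m))) ≤
      ENNReal.ofReal (C' ^ 2) * ENNReal.ofReal lam⁻¹ := by
    have heq : (D * (ENNReal.ofReal (R^n) * volB)) * (D * (A * ENNReal.ofReal (R^m))) =
        B * ENNReal.ofReal lam⁻¹ := by
      have l1 : D * (ENNReal.ofReal (R^n) * volB) =
          (ENNReal.ofReal (C * (2*M)^n) * ENNReal.ofReal lam⁻¹) * volB := by
        rw [← hD1, mul_assoc]
      have l2 : D * (A * ENNReal.ofReal (R^m)) = ENNReal.ofReal (C * (2*M)^m) * A := by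
        calc D * (A * ENNReal.ofReal (R^m)) = (D * ENNReal.ofReal (R^m)) * A := by ring
          _ = ENNReal.ofReal (C * (2*M)^m) * A := by rw [hD2]
      rw [l1, l2, hBdef]; ring
    rw [heq]
    exact mul_le_mul' hBle le_rfl
  -- put everything together
  have hfinal : ∫⁻ x, (‖∫ y in Ω, K x y * u y‖₊ : ℝ≥0∞) ^ (2:ℝ) ∂ν ≤
      (ENNReal.ofReal (C' ^ 2) * ENNReal.ofReal lam⁻¹) * I := by
    refine hmain.trans ?_
    calc (D * (ENNReal.ofReal (R^n) * volB)) * ((D * (A * ENNReal.ofReal (R^m))) * I)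
        = ((D * (ENNReal.ofReal (R^n) * volB)) * (D * (A * ENNReal.ofReal (R^m)))) * I := by
          ring
      _ ≤ (ENNReal.ofReal (C' ^ 2) * ENNReal.ofReal lam⁻¹) * I := mul_le_mul' hconst le_rfl
  -- conclude with eLpNorm
  have hL : eLpNorm (fun x => ∫ y in Ω, K x y * u y) 2 ν =
      (∫⁻ x, (‖∫ y in Ω, K x y * u y‖₊ : ℝ≥0∞) ^ (2:ℝ) ∂ν) ^ ((1:ℝ)/2) := by
    rw [eLpNorm_eq_lintegral_rpow_enorm_toReal (by norm_num) (by norm_num)]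
    norm_num
    rfl
  have hI : eLpNorm u 2 (volume.restrict Ω) = I ^ ((1:ℝ)/2) := by
    rw [eLpNorm_eq_lintegral_rpow_enorm_toReal (by norm_num) (by norm_num), hIdef]
    norm_num
    rfl
  rw [hL, hI]
  calc (∫⁻ x, (‖∫ y in Ω, K x y * u y‖₊ : ℝ≥0∞) ^ (2:ℝ) ∂ν) ^ ((1:ℝ)/2)
      ≤ ((ENNReal.ofReal (C' ^ 2) * ENNReal.ofReal lam⁻¹) * I) ^ ((1:ℝ)/2) :=
        ENNReal.rpow_le_rpow hfinal (by norm_num)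
    _ = ENNReal.ofReal (C' * lam ^ (-(1:ℝ)/2)) * I ^ ((1:ℝ)/2) := by
        rw [ENNReal.mul_rpow_of_nonneg _ _ (by norm_num : (0:ℝ) ≤ 1/2),
          ENNReal.mul_rpow_of_nonneg _ _ (by norm_num : (0:ℝ) ≤ 1/2)]
        congr 1
        rw [ENNReal.ofReal_rpow_of_pos (by positivity),
          ENNReal.ofReal_rpow_of_pos (by positivity),
          ← ENNReal.ofReal_mul (by positivity)]
        congr 1
        have e2 : (C' ^ 2) ^ ((1:ℝ)/2) = C' := by
          rw [← Real.rpow_natCast C' 2, ← Real.rpow_mul hC'pos.le]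
          norm_num
        have e3 : (lam⁻¹) ^ ((1:ℝ)/2) = lam ^ (-(1:ℝ)/2) := by
          rw [← Real.rpow_neg_one lam, ← Real.rpow_mul hlam0.le]
          norm_num
        rw [e2, e3]
end

section
/- Let λ ≥ 2 and 0 < c₄ ≤ 1/2. Define G_λ = {ξ ∈ ℝ^n : 0 ≤ λ − |ξ| ≤ c₄/2 and |ξ' − (λ, 0, …, 0)| ≤ 1/2}, where ξ = (ξ', ξ_n) with ξ' ∈ ℝ^{n-1}. Then the Lebesgue measure of G_λ satisfies c √λ ≤ |G_λ| ≤ C √λ for constants c, C > 0 depending only on n and c₄. -/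
open MeasureTheory Metric ENNReal

set_option maxHeartbeats 2000000 in
/-- writing `ℝⁿ = ℝ^{n-1} × ℝ`, `ξ = (ξ', ξₙ)`, the curved slab
`G_λ = {0 ≤ λ − |ξ| ≤ c₄/2, |ξ' − (λ,0,…,0)| ≤ 1/2}` has Lebesgue measure `≍ √λ`. -/
theorem statement18 (m : ℕ) (hm : 0 < m) (c₄ : ℝ) (hc₄ : 0 < c₄) (hc₄' : c₄ ≤ 1 / 2) :
    ∃ c C : ℝ, 0 < c ∧ 0 < C ∧
      ∀ lam : ℝ, 2 ≤ lam →
        let normξ : EuclideanSpace ℝ (Fin m) × ℝ → ℝ :=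
          fun p => Real.sqrt (‖p.1‖ ^ 2 + p.2 ^ 2)
        let G : Set (EuclideanSpace ℝ (Fin m) × ℝ) :=
          {p | 0 ≤ lam - normξ p ∧ lam - normξ p ≤ c₄ / 2 ∧
            ‖p.1 - lam • EuclideanSpace.single (⟨0, hm⟩ : Fin m) (1 : ℝ)‖ ≤ 1 / 2}
        c * Real.sqrt lam ≤ (volume G).toReal ∧
          (volume G).toReal ≤ C * Real.sqrt lam := by
  set e₁ : EuclideanSpace ℝ (Fin m) := EuclideanSpace.single (⟨0, hm⟩ : Fin m) (1 : ℝ) with he₁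
  have hne₁ : ‖e₁‖ = 1 := by rw [he₁, EuclideanSpace.norm_single]; norm_num
  set Vs : ℝ≥0∞ := volume (closedBall (0 : EuclideanSpace ℝ (Fin m)) (c₄ / 8)) with hVs
  set Vh : ℝ≥0∞ := volume (closedBall (0 : EuclideanSpace ℝ (Fin m)) (1 / 2)) with hVh
  have hVs_pos : 0 < Vs := measure_closedBall_pos _ _ (by linarith)
  have hVs_lt : Vs < ⊤ := measure_closedBall_lt_top
  have hVh_pos : 0 < Vh := measure_closedBall_pos _ _ (by norm_num)
  have hVh_lt : Vh < ⊤ := measure_closedBall_lt_top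
  refine ⟨Vs.toReal * Real.sqrt c₄, 2 * Vh.toReal, ?_, ?_, ?_⟩
  · have := ENNReal.toReal_pos hVs_pos.ne' hVs_lt.ne
    have := Real.sqrt_pos.2 hc₄
    positivity
  · have := ENNReal.toReal_pos hVh_pos.ne' hVh_lt.ne
    positivity
  intro lam hlam normξ G
  have hlam0 : (0:ℝ) < lam := by linarith
  have hsl : Real.sqrt lam ^ 2 = lam := Real.sq_sqrt hlam0.le
  have hsl0 : 0 ≤ Real.sqrt lam := Real.sqrt_nonneg _
  -- the big product set containing G
  set B : Set (EuclideanSpace ℝ (Fin m) × ℝ) :=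
    (closedBall (lam • e₁) (1 / 2)) ×ˢ (Set.Icc (-Real.sqrt lam) (Real.sqrt lam)) with hB
  have hGB : G ⊆ B := by
    rintro ⟨x, t⟩ ⟨h1, h2, h3⟩
    have hs2 : ‖x‖ ^ 2 + t ^ 2 ≤ lam ^ 2 := by
      have h := Real.sq_sqrt (by positivity : (0:ℝ) ≤ ‖x‖ ^ 2 + t ^ 2)
      nlinarith [Real.sqrt_nonneg (‖x‖ ^ 2 + t ^ 2)]
    have hxl : lam - 1 / 2 ≤ ‖x‖ := by
      have := norm_sub_norm_le (lam • e₁) x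
      rw [norm_smul, hne₁, Real.norm_eq_abs, abs_of_pos hlam0, mul_one,
        ← norm_neg (lam • e₁ - x), neg_sub] at this
      linarith
    have ht2 : t ^ 2 ≤ lam := by nlinarith
    constructor
    · exact mem_closedBall_iff_norm.2 h3
    · have : |t| ≤ Real.sqrt lam := by
        rw [← Real.sqrt_sq_eq_abs]
        exact Real.sqrt_le_sqrt ht2
      exact ⟨neg_le_of_abs_le this, le_of_abs_le this⟩
  have hBvol : volume B = Vh * ENNReal.ofReal (2 * Real.sqrt lam) := by
    rw [hB, Measure.volume_eq_prod, Measure.prod_prod,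
      Measure.addHaar_closedBall_center, Real.volume_Icc, ← hVh]
    congr 1
    ring
  have hBlt : volume B < ⊤ := by
    rw [hBvol]
    exact ENNReal.mul_lt_top hVh_lt ENNReal.ofReal_lt_top
  have hGlt : volume G < ⊤ := lt_of_le_of_lt (measure_mono hGB) hBlt
  -- the small product set contained in G
  set a : ℝ := lam - 3 * c₄ / 8 with ha
  set S : Set (EuclideanSpace ℝ (Fin m) × ℝ) :=
    (closedBall (a • e₁) (c₄ / 8)) ×ˢ
      (Set.Icc (-(Real.sqrt (c₄ * lam) / 2)) (Real.sqrt (c₄ * lam) / 2)) with hS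
  have hscl : Real.sqrt (c₄ * lam) ^ 2 = c₄ * lam := Real.sq_sqrt (by positivity)
  have hSG : S ⊆ G := by
    rintro ⟨x, t⟩ ⟨hx, ht⟩
    rw [mem_closedBall_iff_norm] at hx
    obtain ⟨ht1, ht2⟩ := ht
    have hae : ‖a • e₁‖ = a := by
      rw [norm_smul, hne₁, Real.norm_eq_abs, mul_one, abs_of_pos (by rw [ha]; linarith)]
    have hxlo : lam - c₄ / 2 ≤ ‖x‖ := by
      have h := norm_sub_norm_le (a • e₁) x
      rw [hae, ← norm_neg (a • e₁ - x), neg_sub, ha] at h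
      linarith
    have hxhi : ‖x‖ ≤ lam - c₄ / 4 := by
      have h := norm_le_norm_add_norm_sub' x (a • e₁)
      rw [hae, ha] at h
      linarith
    have ht2' : t ^ 2 ≤ c₄ * lam / 4 := by
      have habs : |t| ≤ Real.sqrt (c₄ * lam) / 2 := abs_le.2 ⟨ht1, ht2⟩
      have h2 := sq_abs t
      nlinarith [abs_nonneg t, Real.sqrt_nonneg (c₄ * lam)]
    have hsum : ‖x‖ ^ 2 + t ^ 2 ≤ lam ^ 2 := by nlinarith [norm_nonneg x]
    have hx0 : 0 ≤ lam - c₄ / 2 := by linarith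
    refine ⟨?_, ?_, ?_⟩
    · show 0 ≤ lam - Real.sqrt (‖x‖ ^ 2 + t ^ 2)
      have h : Real.sqrt (‖x‖ ^ 2 + t ^ 2) ≤ lam := by
        rw [show lam = Real.sqrt (lam ^ 2) by rw [Real.sqrt_sq hlam0.le]]
        exact Real.sqrt_le_sqrt hsum
      linarith
    · show lam - Real.sqrt (‖x‖ ^ 2 + t ^ 2) ≤ c₄ / 2
      have h : lam - c₄ / 2 ≤ Real.sqrt (‖x‖ ^ 2 + t ^ 2) := by
        rw [show lam - c₄ / 2 = Real.sqrt ((lam - c₄ / 2) ^ 2) by rw [Real.sqrt_sq hx0]]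
        apply Real.sqrt_le_sqrt
        nlinarith [sq_nonneg t, norm_nonneg x]
      linarith
    · show ‖x - lam • e₁‖ ≤ 1 / 2
      have htri : ‖x - lam • e₁‖ ≤ ‖x - a • e₁‖ + ‖a • e₁ - lam • e₁‖ := by
        simpa using norm_add_le (x - a • e₁) (a • e₁ - lam • e₁)
      have hal : ‖a • e₁ - lam • e₁‖ = 3 * c₄ / 8 := by
        rw [← sub_smul, norm_smul, hne₁, mul_one, Real.norm_eq_abs, ha,
          show lam - 3 * c₄ / 8 - lam = -(3 * c₄ / 8) by ring, abs_neg,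
          abs_of_pos (by linarith)]
      rw [hal] at htri
      linarith
  have hSvol : volume S = Vs * ENNReal.ofReal (Real.sqrt (c₄ * lam)) := by
    rw [hS, Measure.volume_eq_prod, Measure.prod_prod,
      Measure.addHaar_closedBall_center, Real.volume_Icc, ← hVs]
    congr 1
    ring
  constructor
  · -- lower bound
    have hle : volume S ≤ volume G := measure_mono hSG
    have := ENNReal.toReal_mono hGlt.ne hle
    rw [hSvol, ENNReal.toReal_mul, ENNReal.toReal_ofReal (Real.sqrt_nonneg _)] at this
    calc Vs.toReal * Real.sqrt c₄ * Real.sqrt lam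
        = Vs.toReal * Real.sqrt (c₄ * lam) := by
          rw [Real.sqrt_mul hc₄.le]; ring
      _ ≤ (volume G).toReal := this
  · -- upper bound
    have hle : volume G ≤ volume B := measure_mono hGB
    have := ENNReal.toReal_mono hBlt.ne hle
    rw [hBvol, ENNReal.toReal_mul, ENNReal.toReal_ofReal (by positivity)] at this
    calc (volume G).toReal ≤ Vh.toReal * (2 * Real.sqrt lam) := this
      _ = 2 * Vh.toReal * Real.sqrt lam := by ring
end
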